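/- arXiv:2206.11143 — 10 statements merged into one kernel-verified Lean document; each statement's English description precedes it below -/
import Mathlib

section
/- Structural lemma about EF1 allocations: Let v and v' be two additive valuation functions of agent i over a finite item set M, and fix the number of agents n. Let EF1(i, w) denote the set of partial allocations A ∈ Π_n(M) that are clean for i (every item in A_i has w-value > 0), non-wasteful (every unallocated item has w-value 0), and envy-free up to one item from i's perspective under w (for every j with A_j ≠ ∅ there exists g ∈ A_j with w(A_i) ≥ w(A_j \ {g})). Then min over A ∈ EF1(i, v) of v(A_i) is at least min over A ∈ EF1(i, v') of v(A_i). That is, the worst-case bundle value (measured by true valuation v) over allocations consistent with reporting v is at least the worst-case over allocations consistent with reporting any v'. -/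
open Finset

/-- `ef1Set n m i w A`: the (partial) allocation `A` is pairwise disjoint, clean for
agent `i` (every item in `A i` has positive `w`-value), non-wasteful (unallocated
items have zero `w`-value), and envy-free up to one item from `i`'s perspective
under the additive valuation `w`. -/
def ef1Set (n m : ℕ) (i : Fin n) (w : Fin m → ℝ) (A : Fin n → Finset (Fin m)) : Prop :=
  (∀ j k, j ≠ k → Disjoint (A j) (A k)) ∧
  (∀ g ∈ A i, 0 < w g) ∧
  (∀ g : Fin m, (∀ j, g ∉ A j) → w g = 0) ∧
  (∀ j, A j ≠ ∅ → ∃ g ∈ A j, ∑ x ∈ A j \ {g}, w x ≤ ∑ x ∈ A i, w x)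

private lemma sum_mono {m : ℕ} {w : Fin m → ℝ} (hw : ∀ g, 0 ≤ w g)
    {s t : Finset (Fin m)} (h : s ⊆ t) : ∑ x ∈ s, w x ≤ ∑ x ∈ t, w x :=
  Finset.sum_le_sum_of_subset_of_nonneg h (fun g _ _ => hw g)

/-- Some EF1 allocation always exists: give all positively valued items to `i`. -/
lemma ef1_exists (n m : ℕ) (i : Fin n) (w : Fin m → ℝ) (hw : ∀ g, 0 ≤ w g) :
    ∃ A : Fin n → Finset (Fin m), ef1Set n m i w A := by
  classical
  set T : Finset (Fin m) := Finset.univ.filter (fun g => 0 < w g) with hT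
  refine ⟨fun j => if j = i then T else ∅, ?_, ?_, ?_, ?_⟩
  all_goals have heval : ∀ j : Fin n,
      (fun j => if j = i then T else ∅ : Fin n → Finset (Fin m)) j
        = if j = i then T else ∅ := fun j => rfl
  · intro j k hjk
    by_cases hj : j = i
    · have hk : ¬ k = i := fun h => hjk (hj.trans h.symm)
      simp [hj, hk]
    · simp [hj]
  · intro g hg
    have hg' : g ∈ T := by rw [heval, if_pos rfl] at hg; exact hg
    rw [hT] at hg'
    exact (Finset.mem_filter.mp hg').2
  · intro g hgall
    have h := hgall i
    rw [heval, if_pos rfl] at h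
    rw [hT] at h
    simp only [Finset.mem_filter, Finset.mem_univ, true_and] at h
    exact le_antisymm (not_lt.mp h) (hw g)
  · intro j hne
    by_cases hj : j = i
    · rw [hj] at hne ⊢
      rw [heval, if_pos rfl] at hne
      simp only [heval, if_pos rfl]
      obtain ⟨g, hg⟩ := Finset.nonempty_iff_ne_empty.mpr hne
      exact ⟨g, hg, sum_mono hw Finset.sdiff_subset⟩
    · rw [heval, if_neg hj] at hne
      exact absurd rfl hne

/-- Key construction: from any `A ∈ EF1(i,v)` we build `B ∈ EF1(i,v')` with
`v(B i) ≤ v(A i)`. -/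
lemma ef1_key (n m : ℕ) (i : Fin n) (v v' : Fin m → ℝ)
    (hv : ∀ g, 0 ≤ v g) (hv' : ∀ g, 0 ≤ v' g)
    (A : Fin n → Finset (Fin m)) (hA : ef1Set n m i v A) :
    ∃ B : Fin n → Finset (Fin m), ef1Set n m i v' B ∧
      ∑ g ∈ B i, v g ≤ ∑ g ∈ A i, v g := by
  classical
  obtain ⟨hdisj, hclean, hwaste, hef1⟩ := hA
  set P' : Finset (Fin m) := Finset.univ.filter (fun g => 0 < v' g) with hP'def
  set U : Finset (Fin m) := P'.filter (fun g => ∀ j, g ∉ A j) with hUdef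
  -- trimmed bundles
  have hXex : ∀ k : Fin n, ∃ Xk : Finset (Fin m),
      Xk ⊆ A k ∩ P' ∧ (∑ g ∈ Xk, v g ≤ ∑ g ∈ A i, v g) ∧
      ((A k ∩ P') \ Xk).card ≤ 1 ∧ (k = i → Xk = A i ∩ P') := by
    intro k
    by_cases hk : k = i
    · subst hk
      refine ⟨A k ∩ P', le_refl _, sum_mono hv Finset.inter_subset_left, ?_, fun _ => rfl⟩
      simp
    · by_cases hne : A k ≠ ∅
      · obtain ⟨g0, hg0, hg0le⟩ := hef1 k hne
        refine ⟨(A k ∩ P') \ {g0}, Finset.sdiff_subset, ?_, ?_, fun h => absurd h hk⟩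
        · refine le_trans (sum_mono hv ?_) hg0le
          intro x hx
          simp only [Finset.mem_sdiff, Finset.mem_inter, Finset.mem_singleton] at hx ⊢
          exact ⟨hx.1.1, hx.2⟩
        · rw [Finset.sdiff_sdiff_self_left]
          exact le_trans (Finset.card_le_card Finset.inter_subset_right) (by simp)
      · push_neg at hne
        refine ⟨∅, Finset.empty_subset _, ?_, ?_, fun h => absurd h hk⟩
        · rw [Finset.sum_empty]
          exact Finset.sum_nonneg (fun g _ => hv g)
        · simp [hne]
  choose X hX1 hX2 hX3 hX4 using hXex
  obtain ⟨kstar, -, hmax⟩ :=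
    Finset.exists_max_image Finset.univ (fun k => ∑ g ∈ X k, v' g) ⟨i, Finset.mem_univ i⟩
  set B : Fin n → Finset (Fin m) := fun j =>
    if j = i then X kstar ∪ U
    else if j = kstar then (A i ∩ P') ∪ ((A kstar ∩ P') \ X kstar)
    else A j ∩ P' with hBdef
  have hBi : B i = X kstar ∪ U := by simp [hBdef]
  have hBk : ¬ kstar = i → B kstar = (A i ∩ P') ∪ ((A kstar ∩ P') \ X kstar) := by
    intro h; simp [hBdef, h]
  have hBo : ∀ j, ¬ j = i → ¬ j = kstar → B j = A j ∩ P' := by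
    intro j h1 h2; simp [hBdef, h1, h2]
  have hUP' : U ⊆ P' := Finset.filter_subset _ _
  have hUA : ∀ j, ∀ g ∈ U, g ∉ A j := fun j g hg => (Finset.mem_filter.mp hg).2 j
  have hUv : ∀ g ∈ U, v g = 0 := fun g hg => hwaste g (Finset.mem_filter.mp hg).2
  have hXA : ∀ k, X k ⊆ A k := fun k => (hX1 k).trans Finset.inter_subset_left
  have hXP' : ∀ k, X k ⊆ P' := fun k => (hX1 k).trans Finset.inter_subset_right
  have hdisj' : ∀ {a b : Fin n} {g}, a ≠ b → g ∈ A a → g ∈ A b → False :=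
    fun hab ha hb => Finset.disjoint_left.mp (hdisj _ _ hab) ha hb
  -- location of an item pins down its owner in B
  have hloc : ∀ j (g : Fin m), g ∈ B j →
      (g ∈ X kstar ∪ U ∧ j = i) ∨
      (g ∉ X kstar ∪ U ∧ g ∈ A i ∧ j = kstar) ∨
      (g ∉ X kstar ∪ U ∧ g ∉ A i ∧ g ∈ A j) := by
    intro j g hg
    by_cases hji : j = i
    · subst hji; rw [hBi] at hg; exact Or.inl ⟨hg, rfl⟩
    · by_cases hjk : j = kstar
      · subst hjk
        rw [hBk hji] at hg
        rcases Finset.mem_union.mp hg with h | h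
        · have hgi : g ∈ A i := (Finset.mem_inter.mp h).1
          refine Or.inr (Or.inl ⟨?_, hgi, rfl⟩)
          intro hmem
          rcases Finset.mem_union.mp hmem with h2 | h2
          · exact hdisj' hji (hXA j h2) hgi
          · exact hUA i g h2 hgi
        · obtain ⟨h1, h2⟩ := Finset.mem_sdiff.mp h
          have hgA : g ∈ A j := (Finset.mem_inter.mp h1).1
          refine Or.inr (Or.inr ⟨?_, ?_, hgA⟩)
          · intro hmem
            rcases Finset.mem_union.mp hmem with h3 | h3
            · exact h2 h3
            · exact hUA j g h3 hgA
          · intro hgi; exact hdisj' hji hgA hgi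
      · rw [hBo j hji hjk] at hg
        have hgA : g ∈ A j := (Finset.mem_inter.mp hg).1
        refine Or.inr (Or.inr ⟨?_, ?_, hgA⟩)
        · intro hmem
          rcases Finset.mem_union.mp hmem with h2 | h2
          · exact hdisj' hjk hgA (hXA kstar h2)
          · exact hUA j g h2 hgA
        · intro hgi; exact hdisj' hji hgA hgi
  have huniq : ∀ j₁ j₂ (g : Fin m), g ∈ B j₁ → g ∈ B j₂ → j₁ = j₂ := by
    intro j₁ j₂ g h1 h2
    rcases hloc j₁ g h1 with ⟨hu1, rfl⟩ | ⟨hn1, hi1, rfl⟩ | ⟨hn1, hni1, ha1⟩ <;>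
      rcases hloc j₂ g h2 with ⟨hu2, rfl⟩ | ⟨hn2, hi2, rfl⟩ | ⟨hn2, hni2, ha2⟩
    · rfl
    · exact absurd hu1 hn2
    · exact absurd hu1 hn2
    · exact absurd hu2 hn1
    · rfl
    · exact absurd hi1 hni2
    · exact absurd hu2 hn1
    · exact absurd hi2 hni1
    · by_contra hne; exact hdisj' hne ha1 ha2
  have hBdisj : ∀ j k, j ≠ k → Disjoint (B j) (B k) := by
    intro j k hjk
    rw [Finset.disjoint_left]
    intro g h1 h2
    exact hjk (huniq j k g h1 h2)
  have hBclean : ∀ g ∈ B i, 0 < v' g := by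
    intro g hg
    rw [hBi] at hg
    have hgP' : g ∈ P' := by
      rcases Finset.mem_union.mp hg with h | h
      · exact hXP' kstar h
      · exact hUP' h
    rw [hP'def] at hgP'
    exact (Finset.mem_filter.mp hgP').2
  have hBwaste : ∀ g : Fin m, (∀ j, g ∉ B j) → v' g = 0 := by
    intro g hg
    by_contra h0
    have hgP' : g ∈ P' := by
      rw [hP'def]
      simp only [Finset.mem_filter, Finset.mem_univ, true_and]
      exact lt_of_le_of_ne (hv' g) (Ne.symm h0)
    by_cases hall : ∀ j, g ∉ A j
    · exact hg i (by
        rw [hBi]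
        exact Finset.mem_union_right _ (Finset.mem_filter.mpr ⟨hgP', hall⟩))
    · push_neg at hall
      obtain ⟨j0, hj0⟩ := hall
      by_cases hki : kstar = i
      · by_cases hj0i : j0 = i
        · apply hg i
          rw [hBi, hki, hX4 i rfl]
          exact Finset.mem_union_left _ (Finset.mem_inter.mpr ⟨hj0i ▸ hj0, hgP'⟩)
        · apply hg j0
          rw [hBo j0 hj0i (fun h => hj0i (h.trans hki))]
          exact Finset.mem_inter.mpr ⟨hj0, hgP'⟩
      · by_cases hj0i : j0 = i
        · apply hg kstar
          rw [hBk hki]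
          exact Finset.mem_union_left _ (Finset.mem_inter.mpr ⟨hj0i ▸ hj0, hgP'⟩)
        · by_cases hj0k : j0 = kstar
          · by_cases hgX : g ∈ X kstar
            · apply hg i
              rw [hBi]
              exact Finset.mem_union_left _ hgX
            · apply hg kstar
              rw [hBk hki]
              exact Finset.mem_union_right _
                (Finset.mem_sdiff.mpr ⟨Finset.mem_inter.mpr ⟨hj0k ▸ hj0, hgP'⟩, hgX⟩)
          · apply hg j0
            rw [hBo j0 hj0i hj0k]
            exact Finset.mem_inter.mpr ⟨hj0, hgP'⟩
  have hrem : ∀ (Yk Xk : Finset (Fin m)), Yk ≠ ∅ → (Yk \ Xk).card ≤ 1 →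
      ∃ g ∈ Yk, Yk \ {g} ⊆ Xk := by
    intro Yk Xk hne hcard
    by_cases h : (Yk \ Xk).Nonempty
    · obtain ⟨g, hg⟩ := h
      refine ⟨g, (Finset.mem_sdiff.mp hg).1, ?_⟩
      intro x hx
      obtain ⟨hx1, hx2⟩ := Finset.mem_sdiff.mp hx
      by_contra hxX
      exact hx2 (Finset.mem_singleton.mpr
        (Finset.card_le_one.mp hcard x (Finset.mem_sdiff.mpr ⟨hx1, hxX⟩) g hg))
    · obtain ⟨g, hg⟩ := Finset.nonempty_iff_ne_empty.mpr hne
      refine ⟨g, hg, ?_⟩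
      intro x hx
      obtain ⟨hx1, -⟩ := Finset.mem_sdiff.mp hx
      by_contra hxX
      exact h ⟨x, Finset.mem_sdiff.mpr ⟨hx1, hxX⟩⟩
  have hsum'max : ∀ k, ∑ g ∈ X k, v' g ≤ ∑ x ∈ B i, v' x := by
    intro k
    refine le_trans (hmax k (Finset.mem_univ k)) ?_
    rw [hBi]
    exact sum_mono hv' Finset.subset_union_left
  have hBef1 : ∀ j, B j ≠ ∅ → ∃ g ∈ B j, ∑ x ∈ B j \ {g}, v' x ≤ ∑ x ∈ B i, v' x := by
    intro j hne
    by_cases hji : j = i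
    · subst hji
      obtain ⟨g, hg⟩ := Finset.nonempty_iff_ne_empty.mpr hne
      exact ⟨g, hg, sum_mono hv' Finset.sdiff_subset⟩
    · by_cases hjk : j = kstar
      · subst hjk
        rw [hBk hji] at hne ⊢
        have hcard : (((A i ∩ P') ∪ ((A j ∩ P') \ X j)) \ (A i ∩ P')).card ≤ 1 := by
          refine le_trans (Finset.card_le_card ?_) (hX3 j)
          intro x hx
          obtain ⟨hx1, hx2⟩ := Finset.mem_sdiff.mp hx
          rcases Finset.mem_union.mp hx1 with h | h
          · exact absurd h hx2
          · exact h
        obtain ⟨g, hg, hsub⟩ := hrem _ _ hne hcard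
        refine ⟨g, hg, le_trans (sum_mono hv' hsub) ?_⟩
        rw [← hX4 i rfl]
        exact hsum'max i
      · rw [hBo j hji hjk] at hne ⊢
        obtain ⟨g, hg, hsub⟩ := hrem _ _ hne (hX3 j)
        exact ⟨g, hg, le_trans (sum_mono hv' hsub) (hsum'max j)⟩
  have hdisjXU : Disjoint (X kstar) U := by
    rw [Finset.disjoint_left]
    intro g hg hgU
    exact hUA kstar g hgU (hXA kstar hg)
  refine ⟨B, ⟨hBdisj, hBclean, hBwaste, hBef1⟩, ?_⟩
  rw [hBi, Finset.sum_union hdisjXU, Finset.sum_eq_zero hUv, add_zero]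
  exact hX2 kstar

/-- structural lemma about EF1 allocations: the worst-case value,
measured by the true valuation `v`, of agent `i`'s bundle over the clean,
non-wasteful, i-EF1 allocations consistent with reporting `v` is at least the
worst case over the allocations consistent with reporting any `v'`. -/
theorem stmt1 (n m : ℕ) (hn : 2 ≤ n) (i : Fin n)
    (v v' : Fin m → ℝ) (hv : ∀ g, 0 ≤ v g) (hv' : ∀ g, 0 ≤ v' g) :
    sInf {x : ℝ | ∃ A : Fin n → Finset (Fin m), ef1Set n m i v' A ∧ x = ∑ g ∈ A i, v g}
      ≤ sInf {x : ℝ | ∃ A : Fin n → Finset (Fin m), ef1Set n m i v A ∧ x = ∑ g ∈ A i, v g} := by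
  classical
  have hbdd : BddBelow {x : ℝ | ∃ A : Fin n → Finset (Fin m),
      ef1Set n m i v' A ∧ x = ∑ g ∈ A i, v g} := by
    refine ⟨0, ?_⟩
    rintro x ⟨A, hA, rfl⟩
    exact Finset.sum_nonneg (fun g _ => hv g)
  obtain ⟨A0, hA0⟩ := ef1_exists n m i v hv
  refine le_csInf ⟨_, ⟨A0, hA0, rfl⟩⟩ ?_
  rintro b ⟨A, hA, rfl⟩
  obtain ⟨B, hB, hle⟩ := ef1_key n m i v v' hv hv' A hA
  exact le_trans (csInf_le hbdd ⟨B, hB, rfl⟩) hle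
end

section
/- Ex-ante proportionality implies the worst-case NOM condition: Let R be a (possibly randomized) mechanism mapping reported additive valuations (b_1,...,b_n) to a fractional allocation that is proportional with respect to the reports, i.e., b_j(R_j(b)) ≥ (1/n) b_j(M) for all j. Then for every agent i with true valuation v_i: min over b_{-i} of v_i(R_i(v_i, b_{-i})) ≥ (1/n) v_i(M) ≥ min over b_{-i} of v_i(R_i(b_i, b_{-i})) for every possible report b_i. In particular, truthful reporting maximizes the worst-case (over others' reports) expected utility. -/
open Finset

/-- if a (possibly randomized, represented by its expected fractional
allocation) mechanism `R` always outputs allocations that are proportional with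
respect to the reported valuations, then for every agent `i` with true valuation
`v`: the worst case (over others' reports) of truthful reporting is at least
`(1/n)·v(M)`, while for every report `bi` there exist reports of the others
under which agent `i`'s expected utility is at most `(1/n)·v(M)`.  Hence
truthful reporting maximizes the worst-case utility. -/
theorem stmt5 (n m : ℕ) (hn : 0 < n)
    (R : (Fin n → Fin m → ℝ) → Fin n → Fin m → ℝ)
    (hfeas : ∀ b : Fin n → Fin m → ℝ, (∀ a j, 0 ≤ b a j) →
      (∀ a j, 0 ≤ R b a j) ∧ (∀ a j, R b a j ≤ 1) ∧ (∀ j, ∑ a, R b a j ≤ 1))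
    (hprop : ∀ b : Fin n → Fin m → ℝ, (∀ a j, 0 ≤ b a j) →
      ∀ a, (1 / (n : ℝ)) * ∑ j, b a j ≤ ∑ j, b a j * R b a j)
    (i : Fin n) (v : Fin m → ℝ) (hv : ∀ j, 0 ≤ v j)
    (bi : Fin m → ℝ) (hbi : ∀ j, 0 ≤ bi j) :
    (∀ b : Fin n → Fin m → ℝ, (∀ a j, 0 ≤ b a j) → b i = v →
        (1 / (n : ℝ)) * ∑ j, v j ≤ ∑ j, v j * R b i j) ∧
    (∃ b : Fin n → Fin m → ℝ, (∀ a j, 0 ≤ b a j) ∧ b i = bi ∧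
        ∑ j, v j * R b i j ≤ (1 / (n : ℝ)) * ∑ j, v j) := by
  constructor
  · intro b hb hbi'
    have := hprop b hb i
    rwa [hbi'] at this
  · set b : Fin n → Fin m → ℝ := Function.update (fun _ => v) i bi with hbdef
    have hb : ∀ a j, 0 ≤ b a j := by
      intro a j
      by_cases h : a = i
      · simp [hbdef, h, hbi j]
      · simp [hbdef, Function.update_of_ne h, hv j]
    have hbi' : b i = bi := by simp [hbdef]
    have hbother : ∀ a, a ≠ i → b a = v := by
      intro a ha; simp [hbdef, Function.update_of_ne ha]
    refine ⟨b, hb, hbi', ?_⟩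
    obtain ⟨hR0, hR1, hRcol⟩ := hfeas b hb
    set V := ∑ j, v j with hV
    -- total value allocated is at most V
    have hT : ∑ a, ∑ j, v j * R b a j ≤ V := by
      rw [Finset.sum_comm]
      calc ∑ j, ∑ a, v j * R b a j = ∑ j, v j * ∑ a, R b a j := by
            simp [Finset.mul_sum]
        _ ≤ ∑ j, v j * 1 := by
            apply Finset.sum_le_sum
            intro j _
            exact mul_le_mul_of_nonneg_left (hRcol j) (hv j)
        _ = V := by simp [hV]
    -- each other agent gets at least V/n
    have hother : ∀ a ∈ Finset.univ.erase i, (1 / (n : ℝ)) * V ≤ ∑ j, v j * R b a j := by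
      intro a ha
      have ha' : a ≠ i := Finset.ne_of_mem_erase ha
      have := hprop b hb a
      rwa [hbother a ha'] at this
    have hsum : ((n : ℝ) - 1) * ((1 / (n : ℝ)) * V) ≤ ∑ a ∈ Finset.univ.erase i, ∑ j, v j * R b a j := by
      have := Finset.card_nsmul_le_sum (Finset.univ.erase i) (fun a => ∑ j, v j * R b a j)
        ((1 / (n : ℝ)) * V) hother
      have hcard : (Finset.univ.erase i).card = n - 1 := by
        simp [Finset.card_erase_of_mem]
      rw [hcard, nsmul_eq_mul] at this
      have h2 : ((n - 1 : ℕ) : ℝ) = (n : ℝ) - 1 := by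
        have h1 : 1 ≤ n := hn
        push_cast [Nat.cast_sub h1]
        ring
      rw [h2] at this
      exact this
    have hsplit : ∑ j, v j * R b i j + ∑ a ∈ Finset.univ.erase i, ∑ j, v j * R b a j
        = ∑ a, ∑ j, v j * R b a j := by
      exact Finset.add_sum_erase _ (fun a => ∑ j, v j * R b a j) (Finset.mem_univ i)
    have hnR : (0 : ℝ) < n := by exact_mod_cast hn
    have h1 : ∑ j, v j * R b i j ≤ V - ((n : ℝ) - 1) * ((1 / (n : ℝ)) * V) := by
      linarith
    have : V - ((n : ℝ) - 1) * ((1 / (n : ℝ)) * V) = (1 / (n : ℝ)) * V := by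
      field_simp
      ring
    linarith
end

section
/- Every mechanism for n = 2 agents and 2 items with normalized additive valuations (values summing to 1) that always outputs a utilitarian-social-welfare-maximizing integral allocation is obviously manipulable. Concretely: fix any tie-breaking; without loss of generality agent 1 receives item 1 with probability at least 1/2 when both report (1, 0). If agent 1's true valuation is (2/3 + ε, 1/3 − ε) for small ε > 0, then her worst-case utility under truthful reporting is at most 1/3 − ε (realized when agent 2 reports value > 2/3 + ε for item 1), while reporting (1, 0) guarantees her expected utility at least 1/3 + ε/2 against every report of agent 2. Hence truthful reporting does not maximize worst-case utility. -/
open Finset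

/-- A reported profile for two agents over two items is normalized: nonnegative
values summing to one for each agent. -/
def normProf2 (b : Fin 2 → Fin 2 → ℝ) : Prop :=
  ∀ a, (∀ j, 0 ≤ b a j) ∧ ∑ j, b a j = 1

/-- every (possibly randomized, represented by marginal allocation
probabilities `M b i j`) mechanism for two agents and two items with normalized
additive valuations that always outputs utilitarian-welfare-maximizing
allocations is obviously manipulable.  WLOG agent `0` gets item `0` with
probability at least `1/2` when both report `(1,0)`.  If agent `0`'s true value
vector is `(2/3 + ε, 1/3 − ε)` then truthful reporting has worst-case utility at
most `1/3 − ε`, while reporting `(1,0)` guarantees expected utility at least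
`1/3 + ε/2` against every normalized report of agent `1`. -/
theorem stmt6
    (M : (Fin 2 → Fin 2 → ℝ) → Fin 2 → Fin 2 → ℝ)
    (hprob : ∀ b, normProf2 b → ∀ i j, 0 ≤ M b i j)
    (hsum : ∀ b, normProf2 b → ∀ j, ∑ i, M b i j = 1)
    -- welfare maximization: only a highest bidder may receive an item
    (hmax : ∀ b, normProf2 b → ∀ i j, 0 < M b i j → ∀ k, b k j ≤ b i j)
    -- WLOG tie-breaking assumption: when both report (1,0), agent 0 gets item 0
    -- with probability at least 1/2
    (htie : (1 : ℝ) / 2 ≤ M (fun _ j => if j = 0 then 1 else 0) 0 0)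
    (ε : ℝ) (hε0 : 0 < ε) (hε1 : ε < 1 / 3) :
    let v : Fin 2 → ℝ := fun j => if j = 0 then 2 / 3 + ε else 1 / 3 - ε
    -- worst case of truthful reporting is at most 1/3 − ε ...
    (∃ b2 : Fin 2 → ℝ, ((∀ j, 0 ≤ b2 j) ∧ ∑ j, b2 j = 1) ∧
      ∑ j, M (fun a => if a = 0 then v else b2) 0 j * v j ≤ 1 / 3 - ε) ∧
    -- ... while reporting (1,0) guarantees at least 1/3 + ε/2 in every case
    (∀ b2 : Fin 2 → ℝ, ((∀ j, 0 ≤ b2 j) ∧ ∑ j, b2 j = 1) →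
      1 / 3 + ε / 2 ≤
        ∑ j, M (fun a => if a = 0 then (fun j => if j = 0 then 1 else 0) else b2) 0 j * v j) := by
  intro v
  constructor
  · -- worst case: agent 1 reports (1,0)
    refine ⟨fun j => if j = 0 then 1 else 0, ⟨?_, ?_⟩, ?_⟩
    · intro j; fin_cases j <;> norm_num
    · simp [Fin.sum_univ_two]
    · set b2 : Fin 2 → ℝ := fun j => if j = 0 then 1 else 0 with hb2
      set b : Fin 2 → Fin 2 → ℝ := fun a => if a = 0 then v else b2 with hb
      have hnp : normProf2 b := by
        intro a
        fin_cases a <;> constructor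
        · intro j; fin_cases j <;> simp [b, v] <;> linarith
        · simp [b, v, Fin.sum_univ_two]; ring
        · intro j; fin_cases j <;> norm_num [b, b2]
        · simp [b, b2, Fin.sum_univ_two]
      have h00 : M b 0 0 = 0 := by
        by_contra h
        have hpos : 0 < M b 0 0 := lt_of_le_of_ne (hprob b hnp 0 0) (Ne.symm h)
        have := hmax b hnp 0 0 hpos 1
        simp [b, b2, v] at this
        linarith
      have h01 : M b 0 1 ≤ 1 := by
        have hs := hsum b hnp 1
        have := hprob b hnp 1 1
        rw [Fin.sum_univ_two] at hs
        linarith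
      have h01n := hprob b hnp 0 1
      rw [Fin.sum_univ_two]
      have hv0 : v 0 = 2/3 + ε := by simp [v]
      have hv1 : v 1 = 1/3 - ε := by simp [v]
      rw [h00, hv0, hv1]
      nlinarith
  · -- reporting (1,0)
    intro b2 hb2
    set r : Fin 2 → ℝ := fun j => if j = 0 then 1 else 0 with hr
    set b : Fin 2 → Fin 2 → ℝ := fun a => if a = 0 then r else b2 with hb
    have hnp : normProf2 b := by
      intro a
      fin_cases a <;> constructor
      · intro j; fin_cases j <;> norm_num [b, r]
      · simp [b, r, Fin.sum_univ_two]
      · intro j; exact le_trans (hb2.1 j) (le_of_eq rfl)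
      · simpa [b] using hb2.2
    have hv0 : v 0 = 2/3 + ε := by simp [v]
    have hv1 : v 1 = 1/3 - ε := by simp [v]
    have h01n := hprob b hnp 0 1
    rw [Fin.sum_univ_two, hv0, hv1]
    by_cases hc : b2 0 = 1
    · have hb21 : b2 1 = 0 := by
        have := hb2.2; rw [Fin.sum_univ_two] at this; linarith
      have hbe : b = fun _ j => if j = 0 then 1 else 0 := by
        funext a j
        fin_cases a <;> fin_cases j <;> simp [b, r, hc, hb21]
      have h00 : 1/2 ≤ M b 0 0 := by rw [hbe]; exact htie
      have h00u : M b 0 0 ≤ 1 := by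
        have hs := hsum b hnp 0
        have := hprob b hnp 1 0
        rw [Fin.sum_univ_two] at hs
        linarith
      nlinarith
    · have hc' : b2 0 < 1 := lt_of_le_of_ne (by
        have := hb2.2; rw [Fin.sum_univ_two] at this
        have := hb2.1 1; linarith) hc
      have h10 : M b 1 0 = 0 := by
        by_contra h
        have hpos : 0 < M b 1 0 := lt_of_le_of_ne (hprob b hnp 1 0) (Ne.symm h)
        have := hmax b hnp 1 0 hpos 0
        simp [b, r] at this
        linarith
      have h00 : M b 0 0 = 1 := by
        have hs := hsum b hnp 0
        rw [Fin.sum_univ_two] at hs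
        linarith
      nlinarith
end

section
/- The utilitarian-welfare-maximizing mechanism with the cyclic-style tie-breaking (ties go to the smallest-index agent, except ties exactly between agents 1 and n go to agent n) satisfies, for n ≥ 3 agents with normalized additive valuations: for every agent i and every report b_i, the worst-case (over others' reports) utility of agent i equals 0. In particular, for every report there exist reports of the other agents under which agent i receives no item. -/
/-!
If agent `i ≠ 0` faces copies of her own report, every agent is a top bidder on every item
and, as `n ≥ 3`, the set of top bidders is not `{0, n - 1}`, so agent `0` wins everything.
For agent `0` with report `x`, pick an item `j₀` with `x j₀ > 0`: agent `n - 1` bids all on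
`j₀`, and the remaining agents move the mass of `x` on `j₀` evenly onto the other items,
strictly outbidding `x` there. On `j₀` agent `0` is outbid unless `x j₀ = 1`, and then the
top bidders are exactly `{0, n - 1}`, so the tie goes to agent `n - 1`.
-/

noncomputable section
open scoped Classical
open Finset

/-- The winner of item `j` under the utilitarian mechanism with the cyclic-style
tie-breaking: among the set `T` of agents with maximal bid on `j`, the item goes
to the smallest-index agent, except when `T` is exactly `{agent 0, agent n-1}`,
in which case it goes to agent `n-1`. -/
def uwinner (n m : ℕ) (b : Fin n → Fin m → ℝ) (j : Fin m) : Option (Fin n) :=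
  let T := Finset.univ.filter (fun a => ∀ a', b a' j ≤ b a j)
  if T.image Fin.val = ({0, n - 1} : Finset ℕ) then T.max else T.min

section SpreadOff

variable {ι : Type*} [Fintype ι] [DecidableEq ι]

def spreadOff (x : ι → ℝ) (j₀ : ι) : ι → ℝ :=
  fun j => if j = j₀ then 0 else x j + x j₀ / (Fintype.card ι - 1)

@[simp]
lemma spreadOff_self (x : ι → ℝ) (j₀ : ι) : spreadOff x j₀ j₀ = 0 := if_pos rfl

lemma lt_spreadOff {x : ι → ℝ} {j₀ j : ι} (hι : 2 ≤ Fintype.card ι) (hx : 0 < x j₀)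
    (hj : j ≠ j₀) : x j < spreadOff x j₀ j := by
  have : (2 : ℝ) ≤ Fintype.card ι := by exact_mod_cast hι
  rw [spreadOff, if_neg hj, lt_add_iff_pos_right]
  exact div_pos hx (by linarith)

lemma spreadOff_mem_stdSimplex {x : ι → ℝ} (hι : 2 ≤ Fintype.card ι)
    (hx : x ∈ stdSimplex ℝ ι) (j₀ : ι) : spreadOff x j₀ ∈ stdSimplex ℝ ι := by
  have hcard : (1 : ℝ) < Fintype.card ι := by exact_mod_cast hι
  refine ⟨fun j => ?_, ?_⟩
  · rw [spreadOff]
    split_ifs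
    · exact le_rfl
    · exact add_nonneg (hx.1 j) (div_nonneg (hx.1 j₀) (by linarith))
  · simp only [spreadOff]
    rw [sum_ite, filter_eq', if_pos (mem_univ _), sum_const_zero, zero_add,
      filter_ne', sum_add_distrib, sum_erase_eq_sub (mem_univ _), hx.2, sum_const,
      card_erase_of_mem (mem_univ _), card_univ, nsmul_eq_mul, Nat.cast_sub (by omega)]
    have hne : (Fintype.card ι : ℝ) - 1 ≠ 0 := by linarith
    field_simp
    ring

end SpreadOff

section Mechanism

variable {n m : ℕ}

def topBidders (b : Fin n → Fin m → ℝ) (j : Fin m) : Finset (Fin n) :=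
  univ.filter fun a => ∀ a', b a' j ≤ b a j

lemma topBidders_eq_filter_eq {b : Fin n → Fin m → ℝ} {j : Fin m} {c : ℝ}
    (hle : ∀ a, b a j ≤ c) (hc : ∃ a, b a j = c) :
    topBidders b j = univ.filter fun a => b a j = c := by
  obtain ⟨a₀, ha₀⟩ := hc
  ext a
  simp only [topBidders, mem_filter, mem_univ, true_and]
  exact ⟨fun h => le_antisymm (hle a) (ha₀ ▸ h a₀), fun h a' => h ▸ hle a'⟩

lemma uwinner_of_image_topBidders_eq {b : Fin n → Fin m → ℝ} {j : Fin m}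
    (h : (topBidders b j).image Fin.val = {0, n - 1}) :
    (uwinner n m b j : WithBot (Fin n)) = (topBidders b j).max :=
  if_pos h

lemma uwinner_of_image_topBidders_ne {b : Fin n → Fin m → ℝ} {j : Fin m}
    (h : (topBidders b j).image Fin.val ≠ {0, n - 1}) :
    (uwinner n m b j : WithTop (Fin n)) = (topBidders b j).min :=
  if_neg h

lemma mem_topBidders_of_uwinner_eq_some {b : Fin n → Fin m → ℝ} {j : Fin m} {i : Fin n}
    (h : uwinner n m b j = some i) : i ∈ topBidders b j := by
  by_cases himage : (topBidders b j).image Fin.val = {0, n - 1}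
  · exact mem_of_max ((uwinner_of_image_topBidders_eq himage).symm.trans h)
  · exact mem_of_min ((uwinner_of_image_topBidders_ne himage).symm.trans h)

lemma uwinner_ne_some_of_lt {b : Fin n → Fin m → ℝ} {j : Fin m} {i a : Fin n}
    (h : b i j < b a j) : uwinner n m b j ≠ some i := fun hi =>
  (h.trans_le ((mem_filter.1 (mem_topBidders_of_uwinner_eq_some hi)).2 a)).false

lemma uwinner_of_topBidders_eq_pair {b : Fin n → Fin m → ℝ} {j : Fin m} {a₀ a₁ : Fin n}
    (ha₀ : a₀.val = 0) (ha₁ : a₁.val = n - 1) (h : topBidders b j = {a₀, a₁}) :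
    uwinner n m b j = some a₁ := by
  have himage : (topBidders b j).image Fin.val = {0, n - 1} := by
    rw [h, image_insert, image_singleton, ha₀, ha₁]
  have hle : a₀ ≤ a₁ := Fin.le_def.2 (by omega)
  have := uwinner_of_image_topBidders_eq himage
  rwa [h, max_insert, max_singleton, max_eq_right (WithBot.coe_le_coe.2 hle)] at this

lemma uwinner_const (hn : 3 ≤ n) (x : Fin m → ℝ) (j : Fin m) :
    uwinner n m (fun _ => x) j = some ⟨0, by omega⟩ := by
  have htop : topBidders (fun _ : Fin n => x) j = univ := by simp [topBidders]
  have himage : (topBidders (fun _ : Fin n => x) j).image Fin.val ≠ {0, n - 1} := by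
    intro h
    have h1 : 1 ∈ (topBidders (fun _ : Fin n => x) j).image Fin.val :=
      mem_image.2 ⟨⟨1, by omega⟩, htop ▸ mem_univ _, rfl⟩
    rw [h] at h1
    simp only [mem_insert, one_ne_zero, mem_singleton, false_or] at h1
    omega
  obtain ⟨a, ha⟩ := min_of_mem (mem_univ (⟨0, by omega⟩ : Fin n))
  have ha0 : a = ⟨0, by omega⟩ :=
    Fin.ext (Nat.le_zero.1 (Fin.le_def.1 (min_le_of_eq (mem_univ ⟨0, by omega⟩) ha)))
  have := uwinner_of_image_topBidders_ne himage
  rwa [htop, ha, ha0] at this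

end Mechanism

section Profile

variable {n m : ℕ} {i : Fin n} {x : Fin m → ℝ} {j₀ : Fin m}

def outbiddingProfile (i : Fin n) (x : Fin m → ℝ) (j₀ : Fin m) : Fin n → Fin m → ℝ :=
  fun a => if a = i then x else if a.val = n - 1 then Pi.single j₀ 1 else spreadOff x j₀

lemma outbiddingProfile_self : outbiddingProfile i x j₀ i = x := if_pos rfl

lemma outbiddingProfile_of_val_eq_last (hn : 2 ≤ n) (hi : i.val = 0) {a : Fin n}
    (ha : a.val = n - 1) : outbiddingProfile i x j₀ a = Pi.single j₀ 1 := by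
  have hai : a ≠ i := fun h => by rw [← h] at hi; omega
  simp only [outbiddingProfile, if_neg hai, if_pos ha]

lemma outbiddingProfile_of_ne {a : Fin n} (hai : a ≠ i) (ha : a.val ≠ n - 1) :
    outbiddingProfile i x j₀ a = spreadOff x j₀ := by
  simp only [outbiddingProfile, if_neg hai, if_neg ha]

lemma outbiddingProfile_mem_stdSimplex (hm : 2 ≤ m) (hx : x ∈ stdSimplex ℝ (Fin m))
    (a : Fin n) : outbiddingProfile i x j₀ a ∈ stdSimplex ℝ (Fin m) := by
  unfold outbiddingProfile
  split_ifs
  exacts [hx, single_mem_stdSimplex ℝ j₀,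
    spreadOff_mem_stdSimplex (by rwa [Fintype.card_fin]) hx j₀]

lemma topBidders_outbiddingProfile_of_eq_one (hn : 2 ≤ n) (hm : 2 ≤ m) (hi : i.val = 0)
    (hx : x ∈ stdSimplex ℝ (Fin m)) (hj₀ : x j₀ = 1) :
    topBidders (outbiddingProfile i x j₀) j₀ = {i, ⟨n - 1, by omega⟩} := by
  have hle (a : Fin n) : outbiddingProfile i x j₀ a j₀ ≤ 1 :=
    (mem_Icc_of_mem_stdSimplex (outbiddingProfile_mem_stdSimplex hm hx a) j₀).2
  rw [topBidders_eq_filter_eq hle ⟨i, outbiddingProfile_self ▸ hj₀⟩]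
  ext a
  simp only [mem_filter, mem_univ, true_and, mem_insert, mem_singleton]
  by_cases hai : a = i
  · simp [hai, outbiddingProfile_self, hj₀]
  by_cases hal : a.val = n - 1
  · simp [outbiddingProfile_of_val_eq_last hn hi hal, Fin.ext_iff, hal]
  · simp [outbiddingProfile_of_ne hai hal, hai, Fin.ext_iff, hal]

lemma uwinner_outbiddingProfile_ne (hn : 3 ≤ n) (hm : 2 ≤ m) (hi : i.val = 0)
    (hx : x ∈ stdSimplex ℝ (Fin m)) (hj₀ : 0 < x j₀) (j : Fin m) :
    uwinner n m (outbiddingProfile i x j₀) j ≠ some i := by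
  rcases eq_or_ne j j₀ with rfl | hj
  · rcases (mem_Icc_of_mem_stdSimplex hx j).2.lt_or_eq with hlt | heq
    · refine uwinner_ne_some_of_lt (a := ⟨n - 1, by omega⟩) ?_
      rwa [outbiddingProfile_self, outbiddingProfile_of_val_eq_last (by omega) hi rfl,
        Pi.single_eq_same]
    · rw [uwinner_of_topBidders_eq_pair hi rfl
        (topBidders_outbiddingProfile_of_eq_one (by omega) hm hi hx heq)]
      exact fun h => absurd (congrArg Fin.val (Option.some_injective _ h))
        (show n - 1 ≠ i.val by omega)
  · have hmiddle : outbiddingProfile i x j₀ ⟨1, by omega⟩ = spreadOff x j₀ :=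
      outbiddingProfile_of_ne (Fin.ne_of_val_ne (by rw [hi]; exact one_ne_zero))
        (show 1 ≠ n - 1 by omega)
    refine uwinner_ne_some_of_lt (a := ⟨1, by omega⟩) ?_
    rw [outbiddingProfile_self, hmiddle]
    exact lt_spreadOff (by rwa [Fintype.card_fin]) hj₀ hj

end Profile

/-- for `n ≥ 3` agents and at least two items, under the
utilitarian-welfare-maximizing mechanism with the above tie-breaking, for every
agent `i` and every normalized report `bi` there exist normalized reports of the
other agents under which agent `i` receives no item at all; hence (the true
valuation being nonnegative) her worst-case utility equals `0`. -/
theorem stmt7 (n m : ℕ) (hn : 3 ≤ n) (hm : 2 ≤ m)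
    (i : Fin n) (bi : Fin m → ℝ) (hbi : (∀ j, 0 ≤ bi j) ∧ ∑ j, bi j = 1) :
    ∃ b : Fin n → Fin m → ℝ,
      (∀ a, (∀ j, 0 ≤ b a j) ∧ ∑ j, b a j = 1) ∧
      b i = bi ∧
      (∀ j : Fin m, uwinner n m b j ≠ some i) ∧
      (∀ v : Fin m → ℝ, (∀ j, 0 ≤ v j) →
        ∑ j ∈ Finset.univ.filter (fun j => uwinner n m b j = some i), v j = 0) := by
  obtain ⟨b, hb, hbi_eq, hlose⟩ : ∃ b : Fin n → Fin m → ℝ,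
      (∀ a, b a ∈ stdSimplex ℝ (Fin m)) ∧ b i = bi ∧ ∀ j, uwinner n m b j ≠ some i := by
    by_cases hi : i.val = 0
    · obtain ⟨j₀, -, hj₀⟩ : ∃ j₀ ∈ univ, (0 : ℝ) < bi j₀ :=
        exists_lt_of_sum_lt (by rw [sum_const_zero, hbi.2]; exact one_pos)
      exact ⟨outbiddingProfile i bi j₀, outbiddingProfile_mem_stdSimplex hm hbi,
        outbiddingProfile_self, uwinner_outbiddingProfile_ne hn hm hi hbi hj₀⟩
    · refine ⟨fun _ => bi, fun _ => hbi, rfl, fun j h => hi ?_⟩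
      rw [uwinner_const hn] at h
      exact congrArg Fin.val (Option.some_injective _ h).symm
  refine ⟨b, hb, hbi_eq, hlose, fun v _ => ?_⟩
  rw [filter_false_of_mem fun j _ => hlose j, sum_empty]
end
end

section
/- The utilitarian-welfare-maximizing mechanism with normalized reports achieves as best case, for every agent i reporting truthfully, the allocation of all items except i's least-valued item; and no report can achieve strictly more. Formally: (a) under the normalization Σ_j b_{k,j} = 1, with any fixed deterministic tie-breaking in which agent i does not win all ties, there is no pair (b_i, b_{-i}) under which agent i receives all items; (b) if agent i reports truthfully and every other agent places value 1 on i's least-valued item j* (and 0 elsewhere), agent i receives M \ {j*}, attaining utility v_i(M) − min_j v_i(j), which is the maximum achievable over all (b_i, b_{-i}). -/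
noncomputable section
open scoped Classical
open Finset

/-- utilitarian mechanism, best case.  `W` assigns each item to a
highest reported bidder (`hwin`), under a fixed deterministic tie-breaking in
which agent `i` does not win all ties (`htie`: when all reports coincide with
`i`'s, some item goes elsewhere).  With normalized reports:
(a) no profile gives agent `i` all the items;
(b) if `i` reports her true valuation `v` and every other agent puts value `1`
on `i`'s least-valued item `j*`, agent `i` attains utility `v(M) − v(j*)`,
which is the maximum achievable over all normalized profiles. -/
theorem stmt8 (n m : ℕ) (hn : 3 ≤ n) (hm : 2 ≤ m)
    (W : (Fin n → Fin m → ℝ) → Fin m → Fin n)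
    (hwin : ∀ (b : Fin n → Fin m → ℝ) (j : Fin m) (a : Fin n), b a j ≤ b (W b j) j)
    (i : Fin n)
    (htie : ∀ b : Fin n → Fin m → ℝ, (∀ a, b a = b i) → ∃ j, W b j ≠ i)
    (v : Fin m → ℝ) (hv : ∀ j, 0 ≤ v j) (hvsum : ∑ j, v j = 1)
    (jstar : Fin m) (hjstar : ∀ j, v jstar ≤ v j) :
    -- (a) agent i never receives every item
    (∀ b : Fin n → Fin m → ℝ, (∀ a, (∀ j, 0 ≤ b a j) ∧ ∑ j, b a j = 1) →
      ∃ j, W b j ≠ i) ∧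
    -- (b) the best case v(M) − v(j*) is attained by truthful reporting ...
    (∃ b : Fin n → Fin m → ℝ,
      (∀ a, (∀ j, 0 ≤ b a j) ∧ ∑ j, b a j = 1) ∧
      b i = v ∧
      (∀ a, a ≠ i → b a = fun j => if j = jstar then 1 else 0) ∧
      ∑ j ∈ Finset.univ.filter (fun j => W b j = i), v j = (∑ j, v j) - v jstar) ∧
    -- ... and cannot be exceeded by any report
    (∀ b : Fin n → Fin m → ℝ, (∀ a, (∀ j, 0 ≤ b a j) ∧ ∑ j, b a j = 1) →
      ∑ j ∈ Finset.univ.filter (fun j => W b j = i), v j ≤ (∑ j, v j) - v jstar) := by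

  have partA : ∀ b : Fin n → Fin m → ℝ, (∀ a, (∀ j, 0 ≤ b a j) ∧ ∑ j, b a j = 1) →
      ∃ j, W b j ≠ i := by
    intro b hb
    by_contra h
    push_neg at h
    have hall : ∀ a, b a = b i := by
      intro a
      have hle : ∀ j, b a j ≤ b i j := fun j => by
        have := hwin b j a
        rwa [h j] at this
      have hsum : ∑ j, (b i j - b a j) = 0 := by
        rw [Finset.sum_sub_distrib, (hb i).2, (hb a).2]; ring
      funext j
      have := (Finset.sum_eq_zero_iff_of_nonneg
        (fun j _ => sub_nonneg.mpr (hle j))).mp hsum j (Finset.mem_univ j)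
      linarith
    obtain ⟨j, hj⟩ := htie b hall
    exact hj (h j)
  have hvj1 : v jstar < 1 := by
    obtain ⟨j1, hj1⟩ : ∃ j1 : Fin m, j1 ≠ jstar := by
      haveI : Nontrivial (Fin m) := Fin.nontrivial_iff_two_le.mpr hm
      exact exists_ne jstar
    have hsub : ({jstar, j1} : Finset (Fin m)) ⊆ univ := Finset.subset_univ _
    have h2 : v jstar + v j1 ≤ ∑ j, v j := by
      have := Finset.sum_le_sum_of_subset_of_nonneg hsub (fun j _ _ => hv j)
      rwa [Finset.sum_pair (Ne.symm hj1)] at this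
    have := hjstar j1
    linarith [hvsum]
  refine ⟨partA, ?_, ?_⟩
  · set b : Fin n → Fin m → ℝ :=
      fun a => if a = i then v else fun j => if j = jstar then 1 else 0 with hbdef
    have hbi : b i = v := by simp [hbdef]
    have hbo : ∀ a, a ≠ i → b a = fun j => if j = jstar then 1 else 0 := by
      intro a ha; simp [hbdef, ha]
    have hbnorm : ∀ a, (∀ j, 0 ≤ b a j) ∧ ∑ j, b a j = 1 := by
      intro a
      by_cases ha : a = i
      · subst ha; rw [hbi]; exact ⟨hv, hvsum⟩
      · rw [hbo a ha]
        refine ⟨fun j => by dsimp only; split <;> norm_num, by simp⟩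
    refine ⟨b, hbnorm, hbi, hbo, ?_⟩
    obtain ⟨a0, ha0⟩ : ∃ a0 : Fin n, a0 ≠ i := by
      haveI : Nontrivial (Fin n) := Fin.nontrivial_iff_two_le.mpr (by omega)
      exact exists_ne i
    have hWjstar : W b jstar ≠ i := by
      intro h
      have := hwin b jstar a0
      rw [h, hbi, hbo a0 ha0] at this
      simp at this
      linarith
    have hsub : (Finset.univ.filter (fun j => W b j = i)) ⊆ Finset.univ.erase jstar := by
      intro j hj
      simp only [Finset.mem_filter, Finset.mem_univ, true_and] at hj
      refine Finset.mem_erase.mpr ⟨?_, Finset.mem_univ j⟩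
      intro hje; subst hje; exact hWjstar hj
    have hzero : ∀ j ∈ Finset.univ.erase jstar,
        j ∉ Finset.univ.filter (fun j => W b j = i) → v j = 0 := by
      intro j hje hjn
      simp only [Finset.mem_filter, Finset.mem_univ, true_and] at hjn
      have hne : j ≠ jstar := (Finset.mem_erase.mp hje).1
      have h1 := hwin b j i
      rw [hbi, hbo (W b j) hjn] at h1
      simp only [if_neg hne] at h1
      linarith [hv j]
    rw [Finset.sum_subset hsub hzero,
      Finset.sum_erase_eq_sub (Finset.mem_univ jstar)]
  · intro b hb
    obtain ⟨j0, hj0⟩ := partA b hb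
    have hsub : (Finset.univ.filter (fun j => W b j = i)) ⊆ Finset.univ.erase j0 := by
      intro j hj
      simp only [Finset.mem_filter, Finset.mem_univ, true_and] at hj
      refine Finset.mem_erase.mpr ⟨?_, Finset.mem_univ j⟩
      intro hje; subst hje; exact hj0 hj
    have h1 := Finset.sum_le_sum_of_subset_of_nonneg hsub (fun j _ _ => hv j)
    rw [Finset.sum_erase_eq_sub (Finset.mem_univ j0)] at h1
    have := hjstar j0
    linarith
end
end

section
/- In any Nash-social-welfare-maximizing integral allocation for 3 agents and 4 items where agent 1 reports b_1 = (2, 2, 1, 1), agent 1 cannot receive exactly the singleton bundle {3} or exactly {4}, for any reported valuations of agents 2 and 3. Consequently agent 1 receives either at least two items, or exactly item 1, or exactly item 2, so her reported utility is at least 2. -/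
noncomputable section
open scoped Classical
open Finset

/-- Utility of agent `a` in an integral allocation under additive valuations. -/
def fdUtil {N M : ℕ} (v : Fin N → Fin M → ℝ) (A : Fin N → Finset (Fin M)) (a : Fin N) : ℝ :=
  ∑ g ∈ A a, v a g

/-- Number of agents with positive utility. -/
def fdPosCount {N M : ℕ} (v : Fin N → Fin M → ℝ) (A : Fin N → Finset (Fin M)) : ℕ :=
  (Finset.univ.filter (fun a => 0 < fdUtil v A a)).card

/-- Product of the utilities of agents with positive utility. -/
def fdNashProd {N M : ℕ} (v : Fin N → Fin M → ℝ) (A : Fin N → Finset (Fin M)) : ℝ :=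
  ∏ a ∈ Finset.univ.filter (fun a => 0 < fdUtil v A a), fdUtil v A a

/-- An integral (partial) allocation: pairwise disjoint bundles. -/
def fdIsAlloc {N M : ℕ} (A : Fin N → Finset (Fin M)) : Prop :=
  ∀ j k, j ≠ k → Disjoint (A j) (A k)

/-- MNW allocation: maximizes the number of agents with positive utility, and
subject to that maximizes the product of the positive utilities. -/
def fdIsMNW {N M : ℕ} (v : Fin N → Fin M → ℝ) (A : Fin N → Finset (Fin M)) : Prop :=
  fdIsAlloc A ∧
  (∀ B, fdIsAlloc B → fdPosCount v B ≤ fdPosCount v A) ∧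
  (∀ B, fdIsAlloc B → fdPosCount v B = fdPosCount v A → fdNashProd v B ≤ fdNashProd v A)

/-! Everything rests on moving a single item to agent 1. If her bundle were empty, each item
(all of which she values) would have to be the only source of utility of its holder, since
otherwise the move makes one more agent happy; but one agent cannot draw all her utility from
two items, and there are four items and only two other agents. If she held only item 3 (or 4),
with utility 1, each of the other three items would have to sit with an agent 2 or 3 who values
it, so one of them holds two such items `g, h`. Moving either one to agent 1 must not raise the
Nash product, and the two inequalities combine to `b₁(g) b₁(h) ≤ 1`, whereas
`b₁(g) b₁(h) ≥ 2`. -/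

section Transfer

variable {N M : ℕ}

def fdTransfer (A : Fin N → Finset (Fin M)) (i : Fin N) (g : Fin M) :
    Fin N → Finset (Fin M) :=
  fun a => if a = i then insert g (A a) else (A a).erase g

variable {v : Fin N → Fin M → ℝ} {A : Fin N → Finset (Fin M)} {i a : Fin N} {g h : Fin M}

theorem fdIsAlloc.transfer (hA : fdIsAlloc A) (i : Fin N) (g : Fin M) :
    fdIsAlloc (fdTransfer A i g) := by
  intro j k hjk
  simp only [fdTransfer]
  rcases eq_or_ne j i with rfl | hj
  · rw [if_pos rfl, if_neg hjk.symm]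
    exact disjoint_insert_left.2 ⟨notMem_erase g _, (hA _ k hjk).mono_right (erase_subset g _)⟩
  rcases eq_or_ne k i with rfl | hk
  · rw [if_neg hj, if_pos rfl]
    exact disjoint_insert_right.2 ⟨notMem_erase g _, (hA j _ hjk).mono_left (erase_subset g _)⟩
  rw [if_neg hj, if_neg hk]
  exact (hA j k hjk).mono (erase_subset g _) (erase_subset g _)

theorem fdUtil_transfer_self (hg : g ∉ A i) :
    fdUtil v (fdTransfer A i g) i = fdUtil v A i + v i g := by
  simp only [fdUtil, fdTransfer, if_true, sum_insert hg, add_comm]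

theorem fdUtil_transfer_of_mem (ha : a ≠ i) (hg : g ∈ A a) :
    fdUtil v (fdTransfer A i g) a = fdUtil v A a - v a g := by
  simp only [fdUtil, fdTransfer, if_neg ha, sum_erase_eq_sub hg]

theorem fdUtil_transfer_of_notMem (ha : a ≠ i) (hg : g ∉ A a) :
    fdUtil v (fdTransfer A i g) a = fdUtil v A a := by
  simp only [fdUtil, fdTransfer, if_neg ha, erase_eq_of_notMem hg]

theorem single_le_fdUtil (hv : ∀ a g, 0 ≤ v a g) (hg : g ∈ A a) : v a g ≤ fdUtil v A a :=
  single_le_sum (fun g _ => hv a g) hg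

theorem add_le_fdUtil (hv : ∀ a g, 0 ≤ v a g) (hgh : g ≠ h) (hg : g ∈ A a) (hh : h ∈ A a) :
    v a g + v a h ≤ fdUtil v A a := by
  rw [← sum_pair hgh]
  exact sum_le_sum_of_subset_of_nonneg (insert_subset hg (singleton_subset_iff.2 hh))
    fun g _ _ => hv a g

end Transfer

def nashFactor (x : ℝ) : ℝ := if 0 < x then x else 1

theorem nashFactor_pos (x : ℝ) : 0 < nashFactor x := by
  unfold nashFactor
  split_ifs with hx
  exacts [hx, one_pos]

theorem nashFactor_of_pos {x : ℝ} (hx : 0 < x) : nashFactor x = x := if_pos hx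

theorem fdNashProd_eq_prod_nashFactor {N M : ℕ} (v : Fin N → Fin M → ℝ)
    (A : Fin N → Finset (Fin M)) : fdNashProd v A = ∏ a, nashFactor (fdUtil v A a) := by
  rw [fdNashProd, prod_filter]
  rfl

theorem prod_univ_eq_mul_mul_prod_erase {ι α : Type*} [Fintype ι] [DecidableEq ι] [CommMonoid α]
    (f : ι → α) {i j : ι} (hij : i ≠ j) :
    ∏ a, f a = f i * f j * ∏ a ∈ (univ.erase i).erase j, f a := by
  rw [mul_assoc, mul_prod_erase _ f (mem_erase.2 ⟨hij.symm, mem_univ j⟩),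
    mul_prod_erase _ f (mem_univ i)]

theorem card_lt_of_injOn_ne {α : Type*} {N : ℕ} {S : Finset α} {i : Fin N} (f : α → Fin N)
    (hf : ∀ g ∈ S, f g ≠ i) (hinj : Set.InjOn f S) : #S < N := by
  have hS := card_le_card_of_injOn f (fun g hg => mem_erase.2 ⟨hf g hg, mem_univ _⟩) hinj
  rw [card_erase_of_mem (mem_univ i), card_univ, Fintype.card_fin] at hS
  have := i.pos
  omega

namespace fdIsMNW

variable {N M : ℕ} {v : Fin N → Fin M → ℝ} {A : Fin N → Finset (Fin M)} {i j : Fin N}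
  {g h : Fin M}

theorem nashProd_le (hM : fdIsMNW v A) {B : Fin N → Finset (Fin M)} (hB : fdIsAlloc B)
    (hpos : ∀ a, 0 < fdUtil v B a ↔ 0 < fdUtil v A a) : fdNashProd v B ≤ fdNashProd v A :=
  hM.2.2 B hB (by simp only [fdPosCount, hpos])

theorem pos_of_pos_of_subset (hM : fdIsMNW v A) {B : Fin N → Finset (Fin M)} (hB : fdIsAlloc B)
    (hsub : ∀ a, 0 < fdUtil v A a → 0 < fdUtil v B a) (hi : 0 < fdUtil v B i) :
    0 < fdUtil v A i := by
  by_contra hAi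
  have hlt : univ.filter (fun a => 0 < fdUtil v A a) ⊂ univ.filter (fun a => 0 < fdUtil v B a) :=
    (ssubset_iff_of_subset (monotone_filter_right _ fun a _ => hsub a)).2
      ⟨i, by simpa, by simpa using hAi⟩
  exact (hM.2.1 B hB).not_gt (card_lt_card hlt)

theorem exists_holder_of_pos (hv : ∀ a g, 0 ≤ v a g) (hM : fdIsMNW v A)
    (hi : 0 < fdUtil v A i) (hgi : g ∉ A i) (hg : 0 < v i g) :
    ∃ j ≠ i, g ∈ A j ∧ 0 < v j g := by
  by_contra! hfree
  have hBi : fdUtil v (fdTransfer A i g) i = fdUtil v A i + v i g := fdUtil_transfer_self hgi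
  have hBa : ∀ a ≠ i, fdUtil v (fdTransfer A i g) a = fdUtil v A a := by
    intro a ha
    by_cases hga : g ∈ A a
    · rw [fdUtil_transfer_of_mem ha hga, le_antisymm (hfree a ha hga) (hv a g), sub_zero]
    · exact fdUtil_transfer_of_notMem ha hga
  have hfactor_i : nashFactor (fdUtil v A i) < nashFactor (fdUtil v (fdTransfer A i g) i) := by
    rw [hBi, nashFactor_of_pos hi, nashFactor_of_pos (by linarith)]
    linarith
  have hle := hM.nashProd_le (hM.1.transfer i g) fun a => by
    rcases eq_or_ne a i with rfl | ha
    · exact iff_of_true (by linarith) hi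
    · rw [hBa a ha]
  rw [fdNashProd_eq_prod_nashFactor, fdNashProd_eq_prod_nashFactor] at hle
  refine hle.not_gt (prod_lt_prod (fun a _ => nashFactor_pos _) (fun a _ => ?_)
    ⟨i, mem_univ i, hfactor_i⟩)
  rcases eq_or_ne a i with rfl | ha
  · exact hfactor_i.le
  · rw [hBa a ha]

theorem transfer_le (hv : ∀ a g, 0 ≤ v a g) (hM : fdIsMNW v A) (hij : i ≠ j) (hg : g ∈ A j)
    (hi : 0 < fdUtil v A i) (hj : 0 < fdUtil v A j - v j g) :
    (fdUtil v A i + v i g) * (fdUtil v A j - v j g) ≤ fdUtil v A i * fdUtil v A j := by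
  set B := fdTransfer A i g
  have hBi : fdUtil v B i = fdUtil v A i + v i g :=
    fdUtil_transfer_self (disjoint_right.1 (hM.1 i j hij) hg)
  have hBj : fdUtil v B j = fdUtil v A j - v j g := fdUtil_transfer_of_mem hij.symm hg
  have hBa : ∀ a, a ≠ i → a ≠ j → fdUtil v B a = fdUtil v A a := fun a hai haj =>
    fdUtil_transfer_of_notMem hai (disjoint_right.1 (hM.1 a j haj) hg)
  have hBi_pos : 0 < fdUtil v B i := by rw [hBi]; linarith [hv i g]
  have hAj_pos : 0 < fdUtil v A j := by linarith [hv j g]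
  have hle := hM.nashProd_le (hM.1.transfer i g) fun a => by
    rcases eq_or_ne a i with rfl | hai
    · exact iff_of_true hBi_pos hi
    rcases eq_or_ne a j with rfl | haj
    · exact iff_of_true (hBj ▸ hj) hAj_pos
    rw [hBa a hai haj]
  rw [fdNashProd_eq_prod_nashFactor, fdNashProd_eq_prod_nashFactor,
    prod_univ_eq_mul_mul_prod_erase _ hij, prod_univ_eq_mul_mul_prod_erase _ hij,
    prod_congr rfl fun a ha => by
      rw [hBa a (ne_of_mem_erase (mem_of_mem_erase ha)) (ne_of_mem_erase ha)],
    nashFactor_of_pos hBi_pos, nashFactor_of_pos (hBj ▸ hj), nashFactor_of_pos hi,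
    nashFactor_of_pos hAj_pos, hBi, hBj] at hle
  exact le_of_mul_le_mul_right hle (prod_pos fun a _ => nashFactor_pos _)

theorem mul_le_sq_of_mem (hv : ∀ a g, 0 ≤ v a g) (hM : fdIsMNW v A) (hij : i ≠ j)
    (hgh : g ≠ h) (hg : g ∈ A j) (hh : h ∈ A j) (hjg : 0 < v j g) (hjh : 0 < v j h)
    (hi : 0 < fdUtil v A i) : v i g * v i h ≤ fdUtil v A i ^ 2 := by
  by_contra! hlt
  have hpair := add_le_fdUtil hv hgh hg hh
  have hg_le := hM.transfer_le hv hij hg hi (by linarith)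
  have hh_le := hM.transfer_le hv hij hh hi (by linarith)
  -- With `u`, `U` the utilities of `i`, `j`: each bound reads `v i g * U ≤ v j g * (u + v i g)`;
  -- weighting by `u + v i h` (resp. `u + v i g`), adding, and using `v j g + v j h ≤ U` leaves
  -- `U * (v i g * v i h - u ^ 2) ≤ 0`.
  nlinarith [mul_le_mul_of_nonneg_left hg_le (add_nonneg hi.le (hv i h)),
    mul_le_mul_of_nonneg_left hh_le (add_nonneg hi.le (hv i g)),
    mul_le_mul_of_nonneg_right hpair (mul_nonneg (add_nonneg hi.le (hv i g))
      (add_nonneg hi.le (hv i h))),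
    mul_pos (by linarith : 0 < fdUtil v A j) (sub_pos.2 hlt)]

theorem exists_holder_of_eq_zero (hv : ∀ a g, 0 ≤ v a g) (hM : fdIsMNW v A)
    (hi : fdUtil v A i = 0) (hg : 0 < v i g) :
    ∃ j ≠ i, g ∈ A j ∧ 0 < fdUtil v A j ∧ fdUtil v A j ≤ v j g := by
  have hgi : g ∉ A i := fun hgi => (single_le_fdUtil hv hgi).not_gt (hi ▸ hg)
  by_contra! hsafe
  refine (hM.pos_of_pos_of_subset (hM.1.transfer i g) (fun a ha => ?_) (i := i)
    (by rw [fdUtil_transfer_self hgi]; linarith)).ne' hi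
  rcases eq_or_ne a i with rfl | hai
  · exact absurd hi ha.ne'
  by_cases hga : g ∈ A a
  · rw [fdUtil_transfer_of_mem hai hga]
    linarith [hsafe a hai hga ha]
  · rwa [fdUtil_transfer_of_notMem hai hga]

theorem card_lt_of_pos (hv : ∀ a g, 0 ≤ v a g) (hM : fdIsMNW v A) (hi : 0 < fdUtil v A i)
    {S : Finset (Fin M)} (hSA : Disjoint S (A i)) (hS : ∀ g ∈ S, 0 < v i g)
    (hS2 : ∀ g ∈ S, ∀ h ∈ S, g ≠ h → fdUtil v A i ^ 2 < v i g * v i h) : #S < N := by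
  have : Nonempty (Fin N) := ⟨i⟩
  choose! holder hne hmem hpos using fun g hg =>
    hM.exists_holder_of_pos hv hi (disjoint_left.1 hSA hg) (hS g hg)
  refine card_lt_of_injOn_ne holder hne fun g hg h hh heq => ?_
  by_contra hgh
  exact (hS2 g hg h hh hgh).not_ge <| hM.mul_le_sq_of_mem hv (hne g hg).symm hgh (hmem g hg)
    (heq ▸ hmem h hh) (hpos g hg) (heq ▸ hpos h hh) hi

theorem card_lt_of_eq_zero (hv : ∀ a g, 0 ≤ v a g) (hM : fdIsMNW v A) (hi : fdUtil v A i = 0)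
    {S : Finset (Fin M)} (hS : ∀ g ∈ S, 0 < v i g) : #S < N := by
  have : Nonempty (Fin N) := ⟨i⟩
  choose! holder hne hmem hpos hle using fun g hg =>
    hM.exists_holder_of_eq_zero hv hi (hS g hg)
  refine card_lt_of_injOn_ne holder hne fun g hg h hh heq => ?_
  by_contra hgh
  have hpair := add_le_fdUtil hv hgh (hmem g hg) (heq ▸ hmem h hh)
  linarith [hpos g hg, hle g hg, heq ▸ hle h hh]

end fdIsMNW

theorem fdIsMNW.ne_singleton {v : Fin 3 → Fin 4 → ℝ} {A : Fin 3 → Finset (Fin 4)}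
    (hv : ∀ a g, 0 ≤ v a g) (hv0 : v 0 = ![2, 2, 1, 1]) (hM : fdIsMNW v A) {g : Fin 4}
    (hg : g = 2 ∨ g = 3) : A 0 ≠ {g} := by
  intro hA
  have hu : fdUtil v A 0 = 1 := by rcases hg with rfl | rfl <;> simp [fdUtil, hA, hv0]
  have hcard := hM.card_lt_of_pos hv (i := 0) (S := univ.erase g) (by rw [hu]; norm_num)
    (by simp [hA]) (fun h _ => by rw [hv0]; fin_cases h <;> norm_num)
    fun h₁ h₁S h₂ h₂S h₁₂ => by
      rw [hu, hv0]
      simp only [mem_erase] at h₁S h₂S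
      rcases hg with rfl | rfl <;> fin_cases h₁ <;> fin_cases h₂ <;> simp_all <;> norm_num
  simp [card_erase_of_mem] at hcard

theorem two_le_sum_of_ne {S : Finset (Fin 4)} (h₀ : S ≠ ∅) (h₂ : S ≠ {2}) (h₃ : S ≠ {3}) :
    2 ≤ ∑ g ∈ S, (![2, 2, 1, 1] : Fin 4 → ℝ) g := by
  have hnat : ∀ S : Finset (Fin 4), S ≠ ∅ → S ≠ {2} → S ≠ {3} →
      2 ≤ ∑ g ∈ S, (![2, 2, 1, 1] : Fin 4 → ℕ) g := by decide
  have hcast : ∀ g, (![2, 2, 1, 1] : Fin 4 → ℝ) g = ((![2, 2, 1, 1] : Fin 4 → ℕ) g : ℝ) := by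
    intro g; fin_cases g <;> simp
  rw [sum_congr rfl fun g _ => hcast g]
  exact_mod_cast hnat S h₀ h₂ h₃

/-- with 3 agents and 4 items, if agent 1 reports
`b₁ = (2, 2, 1, 1)` then in every MNW allocation (for arbitrary nonnegative
reports of agents 2 and 3) agent 1's bundle is neither exactly `{item 3}` nor
exactly `{item 4}` (0-indexed: `{2}` and `{3}`); consequently her reported
utility is at least `2`. -/
theorem stmt10 (b2 b3 : Fin 4 → ℝ) (hb2 : ∀ j, 0 ≤ b2 j) (hb3 : ∀ j, 0 ≤ b3 j) :
    let b : Fin 3 → Fin 4 → ℝ := ![![2, 2, 1, 1], b2, b3]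
    ∀ A : Fin 3 → Finset (Fin 4), fdIsMNW b A →
      A 0 ≠ ({2} : Finset (Fin 4)) ∧ A 0 ≠ ({3} : Finset (Fin 4)) ∧
      2 ≤ fdUtil b A 0 := by
  intro b A hM
  have hv : ∀ a g, 0 ≤ b a g := by
    intro a g
    fin_cases a
    · fin_cases g <;> norm_num [b]
    · exact hb2 g
    · exact hb3 g
  have hne : A 0 ≠ ∅ := fun hA => by
    simpa using hM.card_lt_of_eq_zero hv (i := 0) (S := univ) (by simp [fdUtil, hA])
      fun g _ => by fin_cases g <;> norm_num [b]
  have hne₂ : A 0 ≠ {2} := hM.ne_singleton hv rfl (Or.inl rfl)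
  have hne₃ : A 0 ≠ {3} := hM.ne_singleton hv rfl (Or.inr rfl)
  exact ⟨hne₂, hne₃, two_le_sum_of_ne hne hne₂ hne₃⟩
end
end

section
/- Egalitarian-welfare maximization is obviously manipulable (worst-case witness): consider 3 agents and 4 items where agent 2 reports b_2 = (0, 0, 1, 0) and agent 3 reports b_3 = (0.05, 0.05, 0.9, 0). If agent 1 reports b_1 = (0.3, 0.3, 0.3, 0.1), the unique integral allocation maximizing (first the number of agents with positive utility, then) the minimum positive utility gives item 3 to agent 2, item 4 to agent 1, and items 1, 2 to agent 3; agent 1's utility is 0.1. If instead agent 1 reports (1/3, 1/3, 1/3, 0), every egalitarian-optimal allocation gives agent 1 at least one of items 1, 2, 3, so her true utility is at least 0.3 for all reports b_2, b_3. Hence misreporting strictly improves agent 1's worst-case utility. -/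
noncomputable section
open scoped Classical
open Finset

/-- Minimum utility among agents with positive utility. -/
def fdMinPos {N M : ℕ} (v : Fin N → Fin M → ℝ) (A : Fin N → Finset (Fin M)) : ℝ :=
  sInf {x : ℝ | ∃ a, 0 < fdUtil v A a ∧ x = fdUtil v A a}

/-- Egalitarian-optimal allocation: maximizes the number of agents with positive
utility, and subject to that the minimum utility among those agents. -/
def fdIsEgal {N M : ℕ} (v : Fin N → Fin M → ℝ) (A : Fin N → Finset (Fin M)) : Prop :=
  fdIsAlloc A ∧
  (∀ B, fdIsAlloc B → fdPosCount v B ≤ fdPosCount v A) ∧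
  (∀ B, fdIsAlloc B → fdPosCount v B = fdPosCount v A → fdMinPos v B ≤ fdMinPos v A)

lemma fd_posCount_lt {N M : ℕ} (v : Fin N → Fin M → ℝ) (A B : Fin N → Finset (Fin M))
    (h : ∀ a, 0 < fdUtil v A a → 0 < fdUtil v B a) (a0 : Fin N)
    (hB : 0 < fdUtil v B a0) (hA : ¬ 0 < fdUtil v A a0) :
    fdPosCount v A < fdPosCount v B := by
  apply Finset.card_lt_card
  constructor
  · intro a ha
    simp only [Finset.mem_filter, Finset.mem_univ, true_and] at *
    exact h a ha
  · intro hsub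
    have := hsub (Finset.mem_filter.mpr ⟨Finset.mem_univ a0, hB⟩)
    exact hA (Finset.mem_filter.mp this).2

lemma fd_exists_pos {N M : ℕ} (v : Fin N → Fin M → ℝ) (A : Fin N → Finset (Fin M)) (a : Fin N)
    (h : 0 < fdUtil v A a) : ∃ g ∈ A a, 0 < v a g := by
  by_contra hc
  push_neg at hc
  have : fdUtil v A a ≤ 0 := Finset.sum_nonpos hc
  linarith

lemma fd_free_item (s : Finset (Fin 4)) (hs : s.card ≤ 2) :
    ∃ g0 : Fin 4, g0 ≠ 3 ∧ g0 ∉ s := by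
  by_contra h
  push_neg at h
  have hsub : ({0,1,2} : Finset (Fin 4)) ⊆ s := by
    intro g hg
    fin_cases hg <;> exact h _ (by decide)
  have := Finset.card_le_card hsub
  simp at this
  omega

lemma fd_part2_aux (v : Fin 3 → Fin 4 → ℝ) (A : Fin 3 → Finset (Fin 4)) (hA : fdIsEgal v A)
    (B : Fin 3 → Finset (Fin 4)) (hB : fdIsAlloc B)
    (h : ∀ a, 0 < fdUtil v A a → 0 < fdUtil v B a)
    (hB0 : 0 < fdUtil v B 0) (hA0 : ¬ 0 < fdUtil v A 0) : False := by
  have h1 := fd_posCount_lt v A B h 0 hB0 hA0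
  have h2 := hA.2.1 B hB
  omega

lemma fd_r1_pos (g : Fin 4) (hg : g ≠ 3) : 0 < (![1/3, 1/3, 1/3, 0] : Fin 4 → ℝ) g := by
  fin_cases g <;> simp_all <;> norm_num

lemma fd_part2_main (b2' b3' : Fin 4 → ℝ) (A : Fin 3 → Finset (Fin 4))
    (hA : fdIsEgal ![![1/3, 1/3, 1/3, 0], b2', b3'] A) :
    ∃ g ∈ A 0, g ≠ (3 : Fin 4) := by
  set v : Fin 3 → Fin 4 → ℝ := ![![1/3, 1/3, 1/3, 0], b2', b3'] with hv
  by_contra hc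
  push_neg at hc
  have hA0 : ¬ 0 < fdUtil v A 0 := by
    have : fdUtil v A 0 = 0 := by
      apply Finset.sum_eq_zero
      intro g hg
      have := hc g hg
      subst this
      simp [hv]
    simp [this]
  by_cases P1 : 0 < fdUtil v A 1 <;> by_cases P2 : 0 < fdUtil v A 2
  · obtain ⟨g1, hg1A, hg1v⟩ := fd_exists_pos v A 1 P1
    obtain ⟨g2, hg2A, hg2v⟩ := fd_exists_pos v A 2 P2
    have hg12 : g1 ≠ g2 := by
      intro h
      exact (Finset.disjoint_left.mp (hA.1 1 2 (by decide)) hg1A) (h ▸ hg2A)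
    obtain ⟨g0, hg03, hg0⟩ := fd_free_item {g1, g2}
      (le_trans (Finset.card_insert_le _ _) (by simp))
    simp only [Finset.mem_insert, Finset.mem_singleton, not_or] at hg0
    refine fd_part2_aux v A hA ![{g0}, {g1}, {g2}] ?_ ?_ ?_ hA0
    · intro j k hjk
      fin_cases j <;> fin_cases k <;>
        simp_all [Finset.disjoint_singleton] <;> tauto
    · intro a ha
      fin_cases a
      · exact absurd ha hA0
      · simpa [fdUtil] using hg1v
      · simpa [fdUtil] using hg2v
    · simpa [fdUtil, hv] using fd_r1_pos g0 hg03
  · obtain ⟨g1, hg1A, hg1v⟩ := fd_exists_pos v A 1 P1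
    obtain ⟨g0, hg03, hg0⟩ := fd_free_item {g1} (by simp)
    simp only [Finset.mem_singleton] at hg0
    refine fd_part2_aux v A hA ![{g0}, {g1}, ∅] ?_ ?_ ?_ hA0
    · intro j k hjk
      fin_cases j <;> fin_cases k <;>
        simp_all [Finset.disjoint_singleton] <;> tauto
    · intro a ha
      fin_cases a
      · exact absurd ha hA0
      · simpa [fdUtil] using hg1v
      · exact absurd ha P2
    · simpa [fdUtil, hv] using fd_r1_pos g0 hg03
  · obtain ⟨g2, hg2A, hg2v⟩ := fd_exists_pos v A 2 P2
    obtain ⟨g0, hg03, hg0⟩ := fd_free_item {g2} (by simp)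
    simp only [Finset.mem_singleton] at hg0
    refine fd_part2_aux v A hA ![{g0}, ∅, {g2}] ?_ ?_ ?_ hA0
    · intro j k hjk
      fin_cases j <;> fin_cases k <;>
        simp_all [Finset.disjoint_singleton] <;> tauto
    · intro a ha
      fin_cases a
      · exact absurd ha hA0
      · exact absurd ha P1
      · simpa [fdUtil] using hg2v
    · simpa [fdUtil, hv] using fd_r1_pos g0 hg03
  · refine fd_part2_aux v A hA ![{0}, ∅, ∅] ?_ ?_ ?_ hA0
    · intro j k hjk
      fin_cases j <;> fin_cases k <;> simp_all
    · intro a ha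
      fin_cases a
      · exact absurd ha hA0
      · exact absurd ha P1
      · exact absurd ha P2
    · simpa [fdUtil, hv] using fd_r1_pos 0 (by decide)

lemma fd_part1 (A : Fin 3 → Finset (Fin 4))
    (hA : fdIsEgal ![![3/10, 3/10, 3/10, 1/10], ![0, 0, 1, 0], ![1/20, 1/20, 9/10, 0]] A) :
    A 0 = ({3} : Finset (Fin 4)) ∧ A 1 = ({2} : Finset (Fin 4)) ∧
      A 2 = ({0, 1} : Finset (Fin 4)) ∧
      fdUtil ![![3/10, 3/10, 3/10, 1/10], ![0, 0, 1, 0], ![1/20, 1/20, 9/10, 0]] A 0 = 1/10 := by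
  set v : Fin 3 → Fin 4 → ℝ :=
    ![![3/10, 3/10, 3/10, 1/10], ![0, 0, 1, 0], ![1/20, 1/20, 9/10, 0]] with hv
  set B0 : Fin 3 → Finset (Fin 4) := ![{3}, {2}, {0, 1}] with hB0
  have hB0alloc : fdIsAlloc B0 := by
    intro j k hjk
    fin_cases j <;> fin_cases k <;> simp_all [hB0] <;> decide
  have hU0 : fdUtil v B0 0 = 1/10 := by simp [fdUtil, hv, hB0]
  have hU1 : fdUtil v B0 1 = 1 := by simp [fdUtil, hv, hB0]
  have hU2 : fdUtil v B0 2 = 1/10 := by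
    simp [fdUtil, hv, hB0]
    norm_num
  have hPC : fdPosCount v B0 = 3 := by
    unfold fdPosCount
    rw [Finset.filter_true_of_mem]
    · simp
    · intro a _
      fin_cases a
      · exact lt_of_lt_of_eq (by norm_num) hU0.symm
      · exact lt_of_lt_of_eq (by norm_num) hU1.symm
      · exact lt_of_lt_of_eq (by norm_num) hU2.symm
  have hMP : fdMinPos v B0 = 1/10 := by
    have hset : {x : ℝ | ∃ a, 0 < fdUtil v B0 a ∧ x = fdUtil v B0 a} = {1/10, 1} := by
      ext x
      simp only [Set.mem_setOf_eq, Set.mem_insert_iff, Set.mem_singleton_iff]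
      constructor
      · rintro ⟨a, ha, rfl⟩
        fin_cases a
        · exact Or.inl hU0
        · exact Or.inr hU1
        · exact Or.inl hU2
      · rintro (rfl | rfl)
        · exact ⟨0, by rw [hU0]; norm_num, hU0.symm⟩
        · exact ⟨1, by rw [hU1]; norm_num, hU1.symm⟩
    unfold fdMinPos
    rw [hset, csInf_pair]
    norm_num
  have hcard3 : fdPosCount v A = 3 := by
    have h1 : fdPosCount v A ≤ 3 := by
      have := Finset.card_filter_le (Finset.univ : Finset (Fin 3)) (fun a => 0 < fdUtil v A a)
      simpa [fdPosCount] using this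
    have h2 := hA.2.1 B0 hB0alloc
    omega
  have hpos : ∀ a, 0 < fdUtil v A a := by
    have hc' : (Finset.univ.filter (fun a => 0 < fdUtil v A a)).card = 3 := hcard3
    have huniv : Finset.univ.filter (fun a => 0 < fdUtil v A a) = Finset.univ :=
      Finset.eq_univ_of_card _ (by rw [hc']; rfl)
    intro a
    have ha : a ∈ Finset.univ.filter (fun a => 0 < fdUtil v A a) := by
      rw [huniv]; exact Finset.mem_univ a
    exact (Finset.mem_filter.mp ha).2
  have hmin : 1/10 ≤ fdMinPos v A := by
    have := hA.2.2 B0 hB0alloc (by rw [hPC, hcard3])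
    linarith [hMP ▸ this]
  have hbdd : BddBelow {x : ℝ | ∃ a, 0 < fdUtil v A a ∧ x = fdUtil v A a} := by
    refine ⟨0, ?_⟩
    rintro x ⟨a, ha, rfl⟩
    exact le_of_lt ha
  have hminle : ∀ a, 1/10 ≤ fdUtil v A a := by
    intro a
    have := csInf_le hbdd ⟨a, hpos a, rfl⟩
    calc (1:ℝ)/10 ≤ fdMinPos v A := hmin
      _ ≤ fdUtil v A a := this
  -- item 2 to agent 1
  have h2A1 : (2 : Fin 4) ∈ A 1 := by
    by_contra h
    have hz : fdUtil v A 1 = 0 := by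
      apply Finset.sum_eq_zero
      intro g hg
      have hne : g ≠ 2 := fun e => h (e ▸ hg)
      fin_cases g <;> simp_all [hv]
    linarith [hpos 1]
  have h2nA2 : (2 : Fin 4) ∉ A 2 := Finset.disjoint_left.mp (hA.1 1 2 (by decide)) h2A1
  have h2nA0 : (2 : Fin 4) ∉ A 0 := Finset.disjoint_left.mp (hA.1 1 0 (by decide)) h2A1
  have hnn : ∀ g : Fin 4, 0 ≤ v 2 g := by intro g; fin_cases g <;> simp [hv, Matrix.vecHead, Matrix.vecTail] <;> norm_num
  -- items 0 and 1 to agent 2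
  have h0A2 : (0 : Fin 4) ∈ A 2 := by
    by_contra h
    have hsub : A 2 ⊆ {1, 3} := by
      intro g hg
      have hne0 : g ≠ 0 := fun e => h (e ▸ hg)
      have hne2 : g ≠ 2 := fun e => h2nA2 (e ▸ hg)
      fin_cases g <;> simp_all
    have : fdUtil v A 2 ≤ 1/20 := by
      calc fdUtil v A 2 ≤ ∑ g ∈ ({1, 3} : Finset (Fin 4)), v 2 g :=
            Finset.sum_le_sum_of_subset_of_nonneg hsub (fun g _ _ => hnn g)
        _ = 1/20 := by simp [hv]
    linarith [hminle 2]
  have h1A2 : (1 : Fin 4) ∈ A 2 := by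
    by_contra h
    have hsub : A 2 ⊆ {0, 3} := by
      intro g hg
      have hne1 : g ≠ 1 := fun e => h (e ▸ hg)
      have hne2 : g ≠ 2 := fun e => h2nA2 (e ▸ hg)
      fin_cases g <;> simp_all
    have : fdUtil v A 2 ≤ 1/20 := by
      calc fdUtil v A 2 ≤ ∑ g ∈ ({0, 3} : Finset (Fin 4)), v 2 g :=
            Finset.sum_le_sum_of_subset_of_nonneg hsub (fun g _ _ => hnn g)
        _ = 1/20 := by simp [hv]
    linarith [hminle 2]
  have h0nA0 : (0 : Fin 4) ∉ A 0 := Finset.disjoint_left.mp (hA.1 2 0 (by decide)) h0A2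
  have h1nA0 : (1 : Fin 4) ∉ A 0 := Finset.disjoint_left.mp (hA.1 2 0 (by decide)) h1A2
  have h0nA1 : (0 : Fin 4) ∉ A 1 := Finset.disjoint_left.mp (hA.1 2 1 (by decide)) h0A2
  have h1nA1 : (1 : Fin 4) ∉ A 1 := Finset.disjoint_left.mp (hA.1 2 1 (by decide)) h1A2
  -- A 0 = {3}
  have hA0sub : A 0 ⊆ {3} := by
    intro g hg
    have hne0 : g ≠ 0 := fun e => h0nA0 (e ▸ hg)
    have hne1 : g ≠ 1 := fun e => h1nA0 (e ▸ hg)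
    have hne2 : g ≠ 2 := fun e => h2nA0 (e ▸ hg)
    fin_cases g <;> simp_all
  have hA0 : A 0 = {3} := by
    rcases Finset.subset_singleton_iff.mp hA0sub with h | h
    · exfalso
      have : fdUtil v A 0 = 0 := by simp [fdUtil, h]
      linarith [hpos 0]
    · exact h
  have h3nA1 : (3 : Fin 4) ∉ A 1 := by
    intro h
    exact (Finset.disjoint_left.mp (hA.1 0 1 (by decide)) (by rw [hA0]; exact Finset.mem_singleton_self 3)) h
  have h3nA2 : (3 : Fin 4) ∉ A 2 := by
    intro h
    exact (Finset.disjoint_left.mp (hA.1 0 2 (by decide)) (by rw [hA0]; exact Finset.mem_singleton_self 3)) h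
  have hA1 : A 1 = {2} := by
    apply Finset.Subset.antisymm
    · intro g hg
      have hne0 : g ≠ 0 := fun e => h0nA1 (e ▸ hg)
      have hne1 : g ≠ 1 := fun e => h1nA1 (e ▸ hg)
      have hne3 : g ≠ 3 := fun e => h3nA1 (e ▸ hg)
      fin_cases g <;> simp_all
    · exact Finset.singleton_subset_iff.mpr h2A1
  have hA2 : A 2 = {0, 1} := by
    apply Finset.Subset.antisymm
    · intro g hg
      have hne2 : g ≠ 2 := fun e => h2nA2 (e ▸ hg)
      have hne3 : g ≠ 3 := fun e => h3nA2 (e ▸ hg)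
      fin_cases g <;> simp_all
    · exact Finset.insert_subset h0A2 (Finset.singleton_subset_iff.mpr h1A2)
  refine ⟨hA0, hA1, hA2, ?_⟩
  rw [fdUtil, hA0]
  simp [hv]


/-- egalitarian-welfare maximization is obviously manipulable.
With `b₂ = (0,0,1,0)` and `b₃ = (0.05, 0.05, 0.9, 0)`: if agent 1 (true
valuation `(0.3, 0.3, 0.3, 0.1)`) reports truthfully, the unique
egalitarian-optimal allocation gives her only item 4 (utility `0.1`);
if instead she reports `(1/3, 1/3, 1/3, 0)`, then for all normalized
nonnegative reports of agents 2 and 3 every egalitarian-optimal allocation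
gives her true utility at least `0.3`. -/
theorem stmt11 :
    let v1 : Fin 4 → ℝ := ![3/10, 3/10, 3/10, 1/10]
    let b2 : Fin 4 → ℝ := ![0, 0, 1, 0]
    let b3 : Fin 4 → ℝ := ![1/20, 1/20, 9/10, 0]
    let r1 : Fin 4 → ℝ := ![1/3, 1/3, 1/3, 0]
    -- truthful reporting: worst case utility 0.1, via a uniquely optimal allocation
    (∀ A : Fin 3 → Finset (Fin 4), fdIsEgal ![v1, b2, b3] A →
      A 0 = ({3} : Finset (Fin 4)) ∧ A 1 = ({2} : Finset (Fin 4)) ∧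
      A 2 = ({0, 1} : Finset (Fin 4)) ∧ fdUtil ![v1, b2, b3] A 0 = 1/10) ∧
    -- misreporting (1/3,1/3,1/3,0): true utility at least 0.3 in every case
    (∀ b2' b3' : Fin 4 → ℝ,
      ((∀ j, 0 ≤ b2' j) ∧ ∑ j, b2' j = 1) → ((∀ j, 0 ≤ b3' j) ∧ ∑ j, b3' j = 1) →
      ∀ A : Fin 3 → Finset (Fin 4), fdIsEgal ![r1, b2', b3'] A →
        3/10 ≤ ∑ g ∈ A 0, v1 g) := by
  intro v1 b2 b3 r1
  constructor
  · intro A hA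
    exact fd_part1 A hA
  · intro b2' b3' _ _ A hA
    obtain ⟨g, hgA, hg3⟩ := fd_part2_main b2' b3' A hA
    have h1 : v1 g = 3/10 := by
      fin_cases g <;> simp_all [v1]
    calc (3:ℝ)/10 = v1 g := h1.symm
      _ ≤ ∑ g ∈ A 0, v1 g :=
        Finset.single_le_sum (fun i _ => by fin_cases i <;> norm_num [v1]) hgA
end
end

section
/- Every mechanism for n = 2 agents with normalized additive valuations over 2 items that always outputs (ex-post) allocations maximizing the number of agents with positive utility is obviously manipulable: assume WLOG agent 1 gets item 1 with probability ≥ 1/2 when both report (1,0). With true valuation v_1 = (2/3 + ε, 1/3 − ε), truthful reporting yields worst-case utility at most 1/3 − ε (when agent 2 reports (1,0), the unique allocation giving both agents positive utility gives item 1 to agent 2), while reporting (1,0) yields utility at least 1/3 + ε/2 against every report of agent 2 (if b_{2,2} > 0 agent 1 gets item 1 outright; if b_2 = (1,0) she gets item 1 with probability ≥ 1/2). -/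
noncomputable section
open scoped Classical
open Finset

/-- Reported utility of agent `a` for a 2-agent, 2-item integral allocation. -/
def u2 (b : Fin 2 → Fin 2 → ℝ) (A : Fin 2 → Finset (Fin 2)) (a : Fin 2) : ℝ :=
  ∑ g ∈ A a, b a g

/-- Number of agents with positive reported utility. -/
def pc2 (b : Fin 2 → Fin 2 → ℝ) (A : Fin 2 → Finset (Fin 2)) : ℕ :=
  (Finset.univ.filter (fun a => 0 < u2 b A a)).card

/-- Normalized nonnegative single-agent valuation over two items. -/
def norm2 (w : Fin 2 → ℝ) : Prop := (∀ j, 0 ≤ w j) ∧ ∑ j, w j = 1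

lemma fin2cases : ∀ s : Finset (Fin 2), s = ∅ ∨ s = {0} ∨ s = {1} ∨ s = {0,1} := by decide

lemma both_pos {b : Fin 2 → Fin 2 → ℝ} {A : Fin 2 → Finset (Fin 2)}
    (h : 2 ≤ pc2 b A) : 0 < u2 b A 0 ∧ 0 < u2 b A 1 := by
  have heq : Finset.univ.filter (fun a => 0 < u2 b A a) = Finset.univ :=
    Finset.eq_of_subset_of_card_le (Finset.filter_subset _ _)
      (by simpa [Finset.card_univ, pc2] using h)
  constructor
  · have h0 : (0 : Fin 2) ∈ Finset.univ.filter (fun a => 0 < u2 b A a) := by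
      rw [heq]; exact Finset.mem_univ _
    exact (Finset.mem_filter.mp h0).2
  · have h1 : (1 : Fin 2) ∈ Finset.univ.filter (fun a => 0 < u2 b A a) := by
      rw [heq]; exact Finset.mem_univ _
    exact (Finset.mem_filter.mp h1).2

lemma pc2_eq_two {b : Fin 2 → Fin 2 → ℝ} {B : Fin 2 → Finset (Fin 2)}
    (h0 : 0 < u2 b B 0) (h1 : 0 < u2 b B 1) : pc2 b B = 2 := by
  have : Finset.univ.filter (fun a => 0 < u2 b B a) = Finset.univ := by
    apply Finset.filter_true_of_mem; intro a _; fin_cases a; exacts [h0, h1]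
  simp [pc2, this]

/-- every randomized mechanism `M` (a distribution over integral
allocations for each reported profile) for two agents and two items that
ex-post maximizes the number of agents with positive reported utility is
obviously manipulable.  WLOG when both report `(1,0)` agent 0 gets item 0 with
probability at least `1/2`.  With true valuation `(2/3 + ε, 1/3 − ε)`,
truthful reporting has worst-case expected utility at most `1/3 − ε`, while
reporting `(1,0)` guarantees expected utility at least `1/3 + ε/2`. -/
theorem stmt13
    (M : (Fin 2 → Fin 2 → ℝ) → (Fin 2 → Finset (Fin 2)) → ℝ)
    (hM : ∀ b : Fin 2 → Fin 2 → ℝ, (∀ a, norm2 (b a)) →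
      (∀ A, 0 ≤ M b A) ∧ (∑ A : Fin 2 → Finset (Fin 2), M b A) = 1 ∧
      (∀ A, 0 < M b A → Disjoint (A 0) (A 1) ∧
        ∀ B : Fin 2 → Finset (Fin 2), Disjoint (B 0) (B 1) → pc2 b B ≤ pc2 b A))
    (htie : (1 : ℝ) / 2 ≤
      ∑ A ∈ Finset.univ.filter (fun A : Fin 2 → Finset (Fin 2) => (0 : Fin 2) ∈ A 0),
        M (fun _ j => if j = 0 then 1 else 0) A)
    (ε : ℝ) (hε0 : 0 < ε) (hε1 : ε < 1 / 3) :
    let v : Fin 2 → ℝ := fun j => if j = 0 then 2 / 3 + ε else 1 / 3 - ε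
    (∃ b2 : Fin 2 → ℝ, norm2 b2 ∧
      ∑ A : Fin 2 → Finset (Fin 2),
        M (fun a => if a = 0 then v else b2) A * (∑ g ∈ A 0, v g) ≤ 1 / 3 - ε) ∧
    (∀ b2 : Fin 2 → ℝ, norm2 b2 →
      1 / 3 + ε / 2 ≤
        ∑ A : Fin 2 → Finset (Fin 2),
          M (fun a => if a = 0 then (fun j => if j = 0 then 1 else 0) else b2) A *
            (∑ g ∈ A 0, v g)) := by
  intro v
  have hv0 : v 0 = 2 / 3 + ε := by simp [v]
  have hv1 : v 1 = 1 / 3 - ε := by simp [v]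
  have hvnn : ∀ j, 0 ≤ v j := by
    intro j; fin_cases j <;> simp [hv0, hv1] <;> linarith
  have hvnorm : norm2 v := by
    refine ⟨hvnn, ?_⟩
    rw [Fin.sum_univ_two, hv0, hv1]; ring
  set e : Fin 2 → ℝ := fun j => if j = 0 then 1 else 0 with he
  have he0 : e 0 = 1 := by simp [he]
  have he1 : e 1 = 0 := by simp [he]
  have henorm : norm2 e := by
    refine ⟨?_, ?_⟩
    · intro j; fin_cases j <;> simp [he0, he1]
    · rw [Fin.sum_univ_two, he0, he1]; ring
  -- key fact: if agent 1's report is the indicator e and u2 of agent 1 is positive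
  -- then 0 ∈ A 1
  have key1 : ∀ (b : Fin 2 → Fin 2 → ℝ) (A : Fin 2 → Finset (Fin 2)),
      b 1 = e → 0 < u2 b A 1 → (0 : Fin 2) ∈ A 1 := by
    intro b A hb h
    rcases fin2cases (A 1) with h1 | h1 | h1 | h1 <;>
      simp [u2, h1, hb, he0, he1] at h ⊢
  constructor
  · -- worst case: opponent reports e
    refine ⟨e, henorm, ?_⟩
    set b : Fin 2 → Fin 2 → ℝ := fun a => if a = 0 then v else e with hb
    have hb0 : b 0 = v := by simp [hb]
    have hb1 : b 1 = e := by simp [hb]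
    have hbnorm : ∀ a, norm2 (b a) := by
      intro a; fin_cases a
      · show norm2 (b 0); rw [hb0]; exact hvnorm
      · show norm2 (b 1); rw [hb1]; exact henorm
    obtain ⟨hnn, hsum, hsupp⟩ := hM b hbnorm
    have hstep : ∀ A : Fin 2 → Finset (Fin 2),
        M b A * (∑ g ∈ A 0, v g) ≤ M b A * (1 / 3 - ε) := by
      intro A
      rcases eq_or_lt_of_le (hnn A) with hz | hpos
      · rw [← hz]; simp
      · obtain ⟨hdisj, hmax⟩ := hsupp A hpos
        -- witness allocation with both agents positive
        set B : Fin 2 → Finset (Fin 2) := fun a => if a = 0 then {1} else {0} with hB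
        have hBd : Disjoint (B 0) (B 1) := by simp [hB]
        have hpcB : pc2 b B = 2 := by
          apply pc2_eq_two
          · simp [u2, hB, hb0, hv1]; linarith
          · simp [u2, hB, hb1, he0]
        have h2 : 2 ≤ pc2 b A := hpcB ▸ hmax B hBd
        obtain ⟨hu0, hu1⟩ := both_pos h2
        have h01 : (0 : Fin 2) ∈ A 1 := key1 b A hb1 hu1
        have h00 : (0 : Fin 2) ∉ A 0 := fun hc => (Finset.disjoint_left.mp hdisj hc) h01
        have hA0 : A 0 = {1} := by
          rcases fin2cases (A 0) with h | h | h | h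
          · exact absurd hu0 (by simp [u2, h])
          · exact absurd (h ▸ Finset.mem_singleton_self 0) h00
          · exact h
          · exact absurd (by rw [h]; simp) h00
        rw [hA0]
        simp [hv1]
    calc ∑ A : Fin 2 → Finset (Fin 2), M b A * (∑ g ∈ A 0, v g)
        ≤ ∑ A : Fin 2 → Finset (Fin 2), M b A * (1 / 3 - ε) :=
          Finset.sum_le_sum (fun A _ => hstep A)
      _ = (∑ A : Fin 2 → Finset (Fin 2), M b A) * (1 / 3 - ε) := by
          rw [Finset.sum_mul]
      _ = 1 / 3 - ε := by rw [hsum, one_mul]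
  · -- best case: reporting e guarantees 1/3 + ε/2
    intro b2 hb2
    set b : Fin 2 → Fin 2 → ℝ := fun a => if a = 0 then e else b2 with hb
    have hb0 : b 0 = e := by simp [hb]
    have hb1 : b 1 = b2 := by simp [hb]
    have hbnorm : ∀ a, norm2 (b a) := by
      intro a; fin_cases a
      · show norm2 (b 0); rw [hb0]; exact henorm
      · show norm2 (b 1); rw [hb1]; exact hb2
    obtain ⟨hnn, hsum, hsupp⟩ := hM b hbnorm
    show 1 / 3 + ε / 2 ≤ ∑ A : Fin 2 → Finset (Fin 2), M b A * (∑ g ∈ A 0, v g)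
    rcases eq_or_lt_of_le (hb2.1 1) with hz | hpos
    · -- b2 1 = 0, so b2 = e; use the tie-breaking hypothesis
      have hb2e : b2 = e := by
        funext j; fin_cases j
        · show b2 0 = e 0
          have := hb2.2; rw [Fin.sum_univ_two, ← hz] at this
          rw [he0]; linarith
        · show b2 1 = e 1
          rw [he1, ← hz]
      have hbe : b = fun _ => e := by
        funext a
        by_cases ha : a = 0 <;> simp [hb, hb2e, ha]
      have hsplit := Finset.sum_filter_add_sum_filter_not
        (Finset.univ : Finset (Fin 2 → Finset (Fin 2)))
        (fun A => (0 : Fin 2) ∈ A 0) (fun A => M b A * (∑ g ∈ A 0, v g))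
      have hS2 : 0 ≤ ∑ A ∈ Finset.univ.filter
          (fun A : Fin 2 → Finset (Fin 2) => ¬ (0 : Fin 2) ∈ A 0),
          M b A * (∑ g ∈ A 0, v g) := by
        apply Finset.sum_nonneg
        intro A _
        exact mul_nonneg (hnn A) (Finset.sum_nonneg fun g _ => hvnn g)
      have hS1 : (2 / 3 + ε) * (1 / 2) ≤ ∑ A ∈ Finset.univ.filter
          (fun A : Fin 2 → Finset (Fin 2) => (0 : Fin 2) ∈ A 0),
          M b A * (∑ g ∈ A 0, v g) := by
        have step : ∀ A ∈ Finset.univ.filter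
            (fun A : Fin 2 → Finset (Fin 2) => (0 : Fin 2) ∈ A 0),
            M b A * (2 / 3 + ε) ≤ M b A * (∑ g ∈ A 0, v g) := by
          intro A hA
          have hmem : (0 : Fin 2) ∈ A 0 := (Finset.mem_filter.mp hA).2
          have : v 0 ≤ ∑ g ∈ A 0, v g :=
            Finset.single_le_sum (fun g _ => hvnn g) hmem
          rw [hv0] at this
          exact mul_le_mul_of_nonneg_left this (hnn A)
        calc (2 / 3 + ε) * (1 / 2)
            ≤ (2 / 3 + ε) * ∑ A ∈ Finset.univ.filter
                (fun A : Fin 2 → Finset (Fin 2) => (0 : Fin 2) ∈ A 0), M b A := by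
              apply mul_le_mul_of_nonneg_left _ (by linarith)
              rw [hbe]; exact htie
          _ = ∑ A ∈ Finset.univ.filter
                (fun A : Fin 2 → Finset (Fin 2) => (0 : Fin 2) ∈ A 0),
                M b A * (2 / 3 + ε) := by
              rw [Finset.mul_sum]; exact Finset.sum_congr rfl (fun A _ => mul_comm _ _)
          _ ≤ _ := Finset.sum_le_sum step
      rw [← hsplit]
      have : (2 / 3 + ε) * (1 / 2) = 1 / 3 + ε / 2 := by ring
      linarith
    · -- b2 1 > 0: supported allocations give item 0 to agent 0
      have hstep : ∀ A : Fin 2 → Finset (Fin 2),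
          M b A * (1 / 3 + ε / 2) ≤ M b A * (∑ g ∈ A 0, v g) := by
        intro A
        rcases eq_or_lt_of_le (hnn A) with hz | hp
        · rw [← hz]; simp
        · obtain ⟨hdisj, hmax⟩ := hsupp A hp
          set B : Fin 2 → Finset (Fin 2) := fun a => if a = 0 then {0} else {1} with hB
          have hBd : Disjoint (B 0) (B 1) := by simp [hB]
          have hpcB : pc2 b B = 2 := by
            apply pc2_eq_two
            · simp [u2, hB, hb0, he0]
            · simp [u2, hB, hb1]; exact hpos
          have h2 : 2 ≤ pc2 b A := hpcB ▸ hmax B hBd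
          obtain ⟨hu0, _⟩ := both_pos h2
          -- agent 0 reported e, so positive utility means 0 ∈ A 0
          have h00 : (0 : Fin 2) ∈ A 0 := by
            rcases fin2cases (A 0) with h | h | h | h <;>
              simp [u2, h, hb0, he0, he1] at hu0 ⊢
          have hv0le : v 0 ≤ ∑ g ∈ A 0, v g :=
            Finset.single_le_sum (fun g _ => hvnn g) h00
          rw [hv0] at hv0le
          have : (1 : ℝ) / 3 + ε / 2 ≤ ∑ g ∈ A 0, v g := by linarith
          exact mul_le_mul_of_nonneg_left this (hnn A)
      calc (1 : ℝ) / 3 + ε / 2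
          = (∑ A : Fin 2 → Finset (Fin 2), M b A) * (1 / 3 + ε / 2) := by
            rw [hsum, one_mul]
        _ = ∑ A : Fin 2 → Finset (Fin 2), M b A * (1 / 3 + ε / 2) := by
            rw [Finset.sum_mul]
        _ ≤ _ := Finset.sum_le_sum (fun A _ => hstep A)
end
end

section
/- Dummy agent reduction for Pareto efficiency: given a fair-division instance with agents N and items M, extend it by adding k dummy agents a_1,...,a_k and k dummy items j_1,...,j_k where each dummy agent a_i values item j_1 at 1 and everything else at 0, and original agents value all dummy items at 0. Then in every Pareto efficient integral allocation of the extended instance that maximizes the number of agents with positive utility, (it can be arranged that) dummy agent a_1 receives item j_1, dummy agents receive no item valued positively by original agents, and restricting the allocation to the original agents and items yields an allocation that is Pareto efficient and maximizes the number of original agents with positive utility in the original instance. -/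
noncomputable section
open scoped Classical
open Finset

/-- Utility of agent `a` under additive valuations (general agent/item types). -/
def gUtil {α ι : Type} [DecidableEq ι] (v : α → ι → ℝ) (A : α → Finset ι) (a : α) : ℝ :=
  ∑ g ∈ A a, v a g

/-- Pairwise disjoint bundles. -/
def gIsAlloc {α ι : Type} (A : α → Finset ι) : Prop :=
  ∀ a b, a ≠ b → Disjoint (A a) (A b)

/-- Number of agents with positive utility. -/
def gPosCount {α ι : Type} [Fintype α] [DecidableEq ι] (v : α → ι → ℝ)
    (A : α → Finset ι) : ℕ :=
  (Finset.univ.filter (fun a => 0 < gUtil v A a)).card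

/-- Pareto efficiency of an integral allocation. -/
def gIsPO {α ι : Type} [DecidableEq ι] (v : α → ι → ℝ) (A : α → Finset ι) : Prop :=
  ¬ ∃ B : α → Finset ι, gIsAlloc B ∧
      (∀ a, gUtil v A a ≤ gUtil v B a) ∧ (∃ a, gUtil v A a < gUtil v B a)

/-- The extended valuations: original agents value original items as before and
dummy items at 0; each dummy agent values only the first dummy item, at 1. -/
def extVal {n m : ℕ} (k : ℕ) (v : Fin n → Fin m → ℝ) :
    (Fin n ⊕ Fin k) → (Fin m ⊕ Fin k) → ℝ
  | Sum.inl i, Sum.inl j => v i j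
  | Sum.inl _, Sum.inr _ => 0
  | Sum.inr _, Sum.inl _ => 0
  | Sum.inr _, Sum.inr j => if j.val = 0 then 1 else 0

lemma util_inl {n m k : ℕ} (v : Fin n → Fin m → ℝ) (i : Fin n)
    (s : Finset (Fin m ⊕ Fin k)) :
    ∑ g ∈ s, extVal k v (Sum.inl i) g
      = ∑ j ∈ Finset.univ.filter (fun j : Fin m => Sum.inl j ∈ s), v i j := by
  have h1 : ∑ g ∈ s, extVal k v (Sum.inl i) g
      = ∑ g ∈ Finset.univ, if g ∈ s then extVal k v (Sum.inl i) g else 0 := by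
    rw [Finset.sum_ite_mem, Finset.univ_inter]
  rw [h1, Fintype.sum_sum_type]
  simp [extVal, Finset.sum_filter]

lemma util_inr {n m k : ℕ} (hk : 0 < k) (v : Fin n → Fin m → ℝ) (d : Fin k)
    (s : Finset (Fin m ⊕ Fin k)) :
    ∑ g ∈ s, extVal k v (Sum.inr d) g
      = if Sum.inr (⟨0, hk⟩ : Fin k) ∈ s then 1 else 0 := by
  have key : ∀ g : Fin m ⊕ Fin k, extVal k v (Sum.inr d) g
      = if g = Sum.inr (⟨0, hk⟩ : Fin k) then 1 else 0 := by
    rintro (j | j)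
    · simp [extVal]
    · simp only [extVal]
      by_cases hj : (j : ℕ) = 0
      · have hje : j = ⟨0, hk⟩ := Fin.ext hj
        simp [hje]
      · have hne : j ≠ (⟨0, hk⟩ : Fin k) := by
          intro h; apply hj; rw [h]
        simp [hj, hne]
  rw [Finset.sum_congr rfl fun g _ => key g]
  exact Finset.sum_ite_eq' s (Sum.inr ⟨0, hk⟩) (fun _ => (1:ℝ))

lemma move_alloc {α ι : Type} [DecidableEq α] [DecidableEq ι]
    (A : α → Finset ι) (hA : gIsAlloc A) (a0 : α) (g0 : ι) :
    gIsAlloc (fun x => if x = a0 then insert g0 (A x) else (A x).erase g0) := by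
  set B : α → Finset ι := fun x => if x = a0 then insert g0 (A x) else (A x).erase g0 with hB
  have hsub : ∀ x, B x ⊆ insert g0 (A x) := by
    intro x
    simp only [hB]
    split
    · exact Finset.Subset.refl _
    · exact (Finset.erase_subset _ _).trans (Finset.subset_insert _ _)
  have hnot : ∀ x, x ≠ a0 → g0 ∉ B x := by
    intro x hx
    simp only [hB, if_neg hx]
    exact Finset.notMem_erase _ _
  intro a b hab
  rw [Finset.disjoint_left]
  intro g hga hgb
  rcases Finset.mem_insert.mp (hsub a hga) with rfl | hga'
  · rcases eq_or_ne a a0 with ha | ha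
    · exact hnot b (fun h => hab (ha.trans h.symm)) hgb
    · exact hnot a ha hga
  · rcases Finset.mem_insert.mp (hsub b hgb) with rfl | hgb'
    · rcases eq_or_ne b a0 with hb | hb
      · exact hnot a (fun h => hab (h.trans hb.symm)) hga
      · exact hnot b hb hgb
    · exact (Finset.disjoint_left.mp (hA a b hab)) hga' hgb'

lemma card_filter_sum {α β : Type} [Fintype α] [Fintype β] (p : α ⊕ β → Prop) [DecidablePred p] :
    (Finset.univ.filter p).card
      = (Finset.univ.filter (fun a => p (Sum.inl a))).card
      + (Finset.univ.filter (fun b => p (Sum.inr b))).card := by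
  rw [Finset.card_filter, Finset.card_filter, Finset.card_filter, Fintype.sum_sum_type]

lemma pos_indicator (c : Prop) [Decidable c] : (0:ℝ) < (if c then 1 else 0) ↔ c := by
  split <;> simp_all

/-- dummy agent reduction: extend an instance by `k ≥ 1` dummy
agents and `k` dummy items, where each dummy agent values only the first dummy
item `j₁` (at 1) and original agents value dummy items at 0.  In every Pareto
efficient integral allocation of the extended instance maximizing the number of
agents with positive utility: `j₁` goes to a dummy agent, no dummy agent holds
an original item valued positively by any original agent, and the restriction
to the original agents and items is Pareto efficient and maximizes the number
of original agents with positive utility in the original instance. -/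
theorem stmt15 (n m k : ℕ) (hk : 0 < k)
    (v : Fin n → Fin m → ℝ) (hv : ∀ i j, 0 ≤ v i j)
    (A : (Fin n ⊕ Fin k) → Finset (Fin m ⊕ Fin k))
    (hA : gIsAlloc A)
    (hPO : gIsPO (extVal k v) A)
    (hmaxpos : ∀ B : (Fin n ⊕ Fin k) → Finset (Fin m ⊕ Fin k),
      gIsAlloc B → gPosCount (extVal k v) B ≤ gPosCount (extVal k v) A) :
    -- the first dummy item is allocated to some dummy agent
    (∃ d : Fin k, Sum.inr (⟨0, hk⟩ : Fin k) ∈ A (Sum.inr d)) ∧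
    -- dummy agents hold no original item valued positively by an original agent
    (∀ d : Fin k, ∀ j : Fin m, Sum.inl j ∈ A (Sum.inr d) → ∀ i : Fin n, v i j = 0) ∧
    -- the restricted allocation is PO and maximizes the number of positive
    -- original agents in the original instance
    (∀ A' : Fin n → Finset (Fin m),
      (∀ i, A' i = Finset.univ.filter (fun j : Fin m => Sum.inl j ∈ A (Sum.inl i))) →
      gIsAlloc A' ∧ gIsPO v A' ∧
      (∀ B : Fin n → Finset (Fin m), gIsAlloc B → gPosCount v B ≤ gPosCount v A')) := by
  have parts12 : (∃ d : Fin k, Sum.inr (⟨0, hk⟩ : Fin k) ∈ A (Sum.inr d)) ∧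
      (∀ d : Fin k, ∀ j : Fin m, Sum.inl j ∈ A (Sum.inr d) → ∀ i : Fin n, v i j = 0) := by
    constructor
    · -- part 1
      by_contra hno
      push_neg at hno
      apply hPO
      set j1 : Fin m ⊕ Fin k := Sum.inr ⟨0, hk⟩ with hj1
      set B : (Fin n ⊕ Fin k) → Finset (Fin m ⊕ Fin k) :=
        fun x => if x = Sum.inr (⟨0, hk⟩ : Fin k) then insert j1 (A x) else (A x).erase j1 with hB
      have hUA : ∀ d : Fin k, gUtil (extVal k v) A (Sum.inr d) = 0 := by
        intro d
        unfold gUtil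
        rw [util_inr hk, if_neg (hno d)]
      have hUBinl : ∀ i : Fin n,
          gUtil (extVal k v) B (Sum.inl i) = gUtil (extVal k v) A (Sum.inl i) := by
        intro i
        unfold gUtil
        rw [util_inl, util_inl]
        congr 1
        ext j
        simp [hB, hj1]
      have hUBinr : ∀ d : Fin k,
          gUtil (extVal k v) B (Sum.inr d) = if d = ⟨0, hk⟩ then 1 else 0 := by
        intro d
        unfold gUtil
        rw [util_inr hk]
        by_cases hd : d = ⟨0, hk⟩
        · subst hd
          simp [hB, hj1]
        · rw [if_neg hd, if_neg]
          simp only [hB]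
          rw [if_neg (fun h => hd (Sum.inr.inj h))]
          exact Finset.notMem_erase _ _
      refine ⟨B, move_alloc A hA _ _, fun a => ?_, ⟨Sum.inr ⟨0, hk⟩, ?_⟩⟩
      · cases a with
        | inl i => rw [hUBinl i]
        | inr d => rw [hUA d, hUBinr d]; split <;> norm_num
      · rw [hUA, hUBinr, if_pos rfl]; norm_num
    · -- part 2
      intro d j hmem i
      by_contra hne
      have hpos : 0 < v i j := lt_of_le_of_ne (hv i j) (Ne.symm hne)
      apply hPO
      set B : (Fin n ⊕ Fin k) → Finset (Fin m ⊕ Fin k) :=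
        fun x => if x = Sum.inl i then insert (Sum.inl j) (A x) else (A x).erase (Sum.inl j) with hB
      have hjnot : ∀ x, x ≠ Sum.inr d → Sum.inl j ∉ A x := by
        intro x hx
        exact fun h => (Finset.disjoint_left.mp (hA x (Sum.inr d) hx)) h hmem
      have hUBinr : ∀ d' : Fin k,
          gUtil (extVal k v) B (Sum.inr d') = gUtil (extVal k v) A (Sum.inr d') := by
        intro d'
        unfold gUtil
        rw [util_inr hk, util_inr hk]
        have : (Sum.inr (⟨0, hk⟩ : Fin k) ∈ B (Sum.inr d')) ↔
            (Sum.inr (⟨0, hk⟩ : Fin k) ∈ A (Sum.inr d')) := by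
          simp [hB]
        rw [if_congr this rfl rfl]
      have hUBinl : ∀ i' : Fin n, i' ≠ i →
          gUtil (extVal k v) B (Sum.inl i') = gUtil (extVal k v) A (Sum.inl i') := by
        intro i' hi'
        unfold gUtil
        rw [util_inl, util_inl]
        congr 1
        ext j'
        simp only [hB, Finset.mem_filter, if_neg (fun h => hi' (Sum.inl.inj h)),
          Finset.mem_erase]
        constructor
        · rintro ⟨h1, _, h3⟩; exact ⟨h1, h3⟩
        · rintro ⟨h1, h3⟩
          refine ⟨h1, ?_, h3⟩
          intro h
          exact hjnot (Sum.inl i') (by simp) (h ▸ h3)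
      have hUBi : gUtil (extVal k v) B (Sum.inl i)
          = gUtil (extVal k v) A (Sum.inl i) + v i j := by
        unfold gUtil
        have hBi : B (Sum.inl i) = insert (Sum.inl j) (A (Sum.inl i)) := by
          simp [hB]
        rw [hBi, Finset.sum_insert (hjnot (Sum.inl i) (by simp))]
        have : extVal k v (Sum.inl i) (Sum.inl j) = v i j := rfl
        rw [this]
        ring
      refine ⟨B, move_alloc A hA _ _, fun a => ?_, ⟨Sum.inl i, ?_⟩⟩
      · cases a with
        | inl i' =>
          rcases eq_or_ne i' i with rfl | hi'
          · rw [hUBi]; linarith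
          · rw [hUBinl i' hi']
        | inr d' => rw [hUBinr d']
      · rw [hUBi]; linarith
  obtain ⟨part1, part2⟩ := parts12
  refine ⟨part1, part2, ?_⟩
  intro A' hA'
  have hutilA : ∀ i, gUtil (extVal k v) A (Sum.inl i) = gUtil v A' i := by
    intro i
    unfold gUtil
    rw [util_inl, hA' i]
  have himg : ∀ (B : Fin n → Finset (Fin m)) (i : Fin n),
      ∑ g ∈ (B i).image Sum.inl, extVal k v (Sum.inl i) g = gUtil v B i := by
    intro B i
    rw [Finset.sum_image (by intro a _ b _ h; exact Sum.inl.inj h)]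
    rfl
  refine ⟨?_, ?_, ?_⟩
  · -- gIsAlloc A'
    intro a b hab
    rw [Finset.disjoint_left]
    intro g hga hgb
    rw [hA' a, Finset.mem_filter] at hga
    rw [hA' b, Finset.mem_filter] at hgb
    exact Finset.disjoint_left.mp
      (hA (Sum.inl a) (Sum.inl b) (fun h => hab (Sum.inl.inj h))) hga.2 hgb.2
  · -- gIsPO v A'
    rintro ⟨B, hBalloc, hBge, i0, hBi0⟩
    apply hPO
    set Bh : (Fin n ⊕ Fin k) → Finset (Fin m ⊕ Fin k) := fun x =>
      match x with
      | Sum.inl i => (B i).image Sum.inl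
      | Sum.inr d => (A (Sum.inr d)).filter (fun g => g.isRight) with hBh
    have hBhalloc : gIsAlloc Bh := by
      intro a b hab
      rw [Finset.disjoint_left]
      intro g hga hgb
      cases a with
      | inl i =>
        simp only [hBh, Finset.mem_image] at hga
        obtain ⟨j', hj', rfl⟩ := hga
        cases b with
        | inl i' =>
          simp only [hBh, Finset.mem_image] at hgb
          obtain ⟨j'', hj'', hje⟩ := hgb
          have : j'' = j' := Sum.inl.inj hje
          subst this
          exact Finset.disjoint_left.mp
            (hBalloc i i' (fun h => hab (h ▸ rfl))) hj' hj''
        | inr d =>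
          simp only [hBh, Finset.mem_filter] at hgb
          simp at hgb
      | inr d =>
        simp only [hBh, Finset.mem_filter] at hga
        cases b with
        | inl i' =>
          simp only [hBh, Finset.mem_image] at hgb
          obtain ⟨j'', hj'', rfl⟩ := hgb
          simp at hga
        | inr d' =>
          simp only [hBh, Finset.mem_filter] at hgb
          exact Finset.disjoint_left.mp
            (hA (Sum.inr d) (Sum.inr d') hab) hga.1 hgb.1
    have hBhinl : ∀ i, gUtil (extVal k v) Bh (Sum.inl i) = gUtil v B i := by
      intro i
      unfold gUtil
      exact himg B i
    have hBhinr : ∀ d, gUtil (extVal k v) Bh (Sum.inr d) = gUtil (extVal k v) A (Sum.inr d) := by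
      intro d
      unfold gUtil
      rw [util_inr hk, util_inr hk]
      have : (Sum.inr (⟨0, hk⟩ : Fin k) ∈ Bh (Sum.inr d)) ↔
          (Sum.inr (⟨0, hk⟩ : Fin k) ∈ A (Sum.inr d)) := by
        simp [hBh]
      rw [if_congr this rfl rfl]
    refine ⟨Bh, hBhalloc, fun a => ?_, ⟨Sum.inl i0, ?_⟩⟩
    · cases a with
      | inl i => rw [hBhinl i, hutilA i]; exact hBge i
      | inr d => rw [hBhinr d]
    · rw [hBhinl i0, hutilA i0]; exact hBi0
  · -- maximality
    intro B hBalloc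
    obtain ⟨d0, hd0⟩ := part1
    have huniq : ∀ d : Fin k, (Sum.inr (⟨0, hk⟩ : Fin k) ∈ A (Sum.inr d)) ↔ d = d0 := by
      intro d
      constructor
      · intro hd
        by_contra hne
        exact Finset.disjoint_left.mp
          (hA (Sum.inr d) (Sum.inr d0) (fun h => hne (Sum.inr.inj h))) hd hd0
      · rintro rfl; exact hd0
    have hcountA : gPosCount (extVal k v) A = gPosCount v A' + 1 := by
      unfold gPosCount
      rw [card_filter_sum]
      congr 1
      · congr 1
        ext x
        simp [hutilA x]
      · have h2 : (Finset.univ.filter fun d : Fin k =>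
            0 < gUtil (extVal k v) A (Sum.inr d)) = {d0} := by
          ext d
          simp only [Finset.mem_filter, Finset.mem_univ, true_and, Finset.mem_singleton,
            gUtil, util_inr hk, pos_indicator]
          exact huniq d
        rw [h2, Finset.card_singleton]
    set Bh : (Fin n ⊕ Fin k) → Finset (Fin m ⊕ Fin k) := fun x =>
      match x with
      | Sum.inl i => (B i).image Sum.inl
      | Sum.inr d => if d = (⟨0, hk⟩ : Fin k) then {Sum.inr (⟨0, hk⟩ : Fin k)} else ∅
      with hBh
    have hBhsub : ∀ d : Fin k, Bh (Sum.inr d) ⊆ {Sum.inr (⟨0, hk⟩ : Fin k)} := by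
      intro d
      simp only [hBh]
      split
      · exact Finset.Subset.refl _
      · exact Finset.empty_subset _
    have hBhalloc : gIsAlloc Bh := by
      intro a b hab
      rw [Finset.disjoint_left]
      intro g hga hgb
      cases a with
      | inl i =>
        simp only [hBh, Finset.mem_image] at hga
        obtain ⟨j', hj', rfl⟩ := hga
        cases b with
        | inl i' =>
          simp only [hBh, Finset.mem_image] at hgb
          obtain ⟨j'', hj'', hje⟩ := hgb
          have : j'' = j' := Sum.inl.inj hje
          subst this
          exact Finset.disjoint_left.mp
            (hBalloc i i' (fun h => hab (h ▸ rfl))) hj' hj''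
        | inr d =>
          have := hBhsub d hgb
          simp at this
      | inr d =>
        have hga' := hBhsub d hga
        rw [Finset.mem_singleton] at hga'
        subst hga'
        cases b with
        | inl i' =>
          simp only [hBh, Finset.mem_image] at hgb
          obtain ⟨j'', hj'', hje⟩ := hgb
          exact absurd hje (by simp)
        | inr d' =>
          have hd : d = ⟨0, hk⟩ := by
            by_contra h
            simp only [hBh, if_neg h] at hga
            exact absurd hga (Finset.notMem_empty _)
          have hd' : d' = ⟨0, hk⟩ := by
            by_contra h
            simp only [hBh, if_neg h] at hgb
            exact absurd hgb (Finset.notMem_empty _)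
          exact hab (by rw [hd, hd'])
    have hcountB : gPosCount (extVal k v) Bh = gPosCount v B + 1 := by
      unfold gPosCount
      rw [card_filter_sum]
      congr 1
      · congr 1
        ext x
        have : gUtil (extVal k v) Bh (Sum.inl x) = gUtil v B x := himg B x
        simp [this]
      · have hmem : ∀ d : Fin k,
            (Sum.inr (⟨0, hk⟩ : Fin k) ∈ Bh (Sum.inr d)) ↔ d = ⟨0, hk⟩ := by
          intro d
          simp only [hBh]
          split
          · simp_all
          · simp_all
        have h2 : (Finset.univ.filter fun d : Fin k =>
            0 < gUtil (extVal k v) Bh (Sum.inr d)) = {(⟨0, hk⟩ : Fin k)} := by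
          ext d
          simp only [Finset.mem_filter, Finset.mem_univ, true_and, Finset.mem_singleton,
            gUtil, util_inr hk, pos_indicator]
          exact hmem d
        rw [h2, Finset.card_singleton]
    have := hmaxpos Bh hBhalloc
    rw [hcountA, hcountB] at this
    omega
end
end

section
/- In the PS-Lottery / probabilistic serial setting: if agent i's values satisfy v_{i,1} ≥ v_{i,2} ≥ ... ≥ v_{i,m} and every other agent's reported values are in the opposite order (b_{k,m} ≥ b_{k,m-1} ≥ ... ≥ b_{k,1} for k ≠ i), then the probabilistic serial fractional allocation gives agent i items 1, ..., ⌊m/n⌋ entirely and a fraction m/n − ⌊m/n⌋ of item ⌊m/n⌋ + 1. Moreover, among all fractional allocations in which agent i receives total mass m/n of items (Σ_j X_{i,j} = m/n, X_{i,j} ∈ [0,1]), this allocation maximizes v_i(X_i). -/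
noncomputable section
open scoped Classical
open Finset

/-- The favourite remaining item of an agent with valuation `w`, given remaining
masses `rem`: a remaining item (positive mass) of maximal value, smallest index
among maximizers as tie-breaking. -/
def psTop {m : ℕ} (w : Fin m → ℝ) (rem : Fin m → ℝ) : Option (Fin m) :=
  ((Finset.univ.filter (fun j => 0 < rem j)).filter
    (fun j => ∀ j' ∈ Finset.univ.filter (fun j'' => 0 < rem j''), w j' ≤ w j)).min

/-- Number of agents currently eating item `j`. -/
def psEaters {n m : ℕ} (b : Fin n → Fin m → ℝ) (rem : Fin m → ℝ) (j : Fin m) : ℕ :=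
  (Finset.univ.filter (fun a => psTop (b a) rem = some j)).card

/-- Duration of the current eating phase: the earliest time at which some item
being eaten is fully depleted. -/
def psDelta {n m : ℕ} (b : Fin n → Fin m → ℝ) (rem : Fin m → ℝ) : ℝ :=
  (((Finset.univ.filter (fun j => 0 < rem j ∧ 0 < psEaters b rem j)).image
      (fun j => rem j / (psEaters b rem j : ℝ))).min).getD 0

/-- One phase of the probabilistic serial (simultaneous eating) algorithm:
every agent eats her favourite remaining item at unit rate until some item is
fully depleted. -/
def psStep {n m : ℕ} (b : Fin n → Fin m → ℝ)
    (s : (Fin m → ℝ) × (Fin n → Fin m → ℝ)) : (Fin m → ℝ) × (Fin n → Fin m → ℝ) :=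
  (fun j => s.1 j - psDelta b s.1 * (psEaters b s.1 j : ℝ),
   fun a j => s.2 a j + if psTop (b a) s.1 = some j then psDelta b s.1 else 0)

/-- The fractional allocation output by probabilistic serial (at most `m` phases
are needed, as each phase fully depletes at least one item). -/
def psAlloc (n m : ℕ) (b : Fin n → Fin m → ℝ) : Fin n → Fin m → ℝ :=
  ((psStep b)^[m] (fun _ => 1, fun _ _ => 0)).2

namespace PS16

def g (x : ℝ) : ℝ := min 1 (max 0 x)

lemma g_nonpos {x : ℝ} (h : x ≤ 0) : g x = 0 := by
  simp [g, max_eq_left h]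

lemma g_mem {x : ℝ} (h0 : 0 ≤ x) (h1 : x ≤ 1) : g x = x := by
  simp [g, max_eq_right h0, min_eq_right h1]

lemma g_one {x : ℝ} (h : 1 ≤ x) : g x = 1 := by
  simp [g, min_eq_left (le_max_of_le_right h)]

lemma g_nonneg (x : ℝ) : 0 ≤ g x := le_min zero_le_one (le_max_left _ _)

lemma g_le_one (x : ℝ) : g x ≤ 1 := min_le_left _ _

lemma g_le_max (x : ℝ) : g x ≤ max 0 x := min_le_right _ _

def remT (n m : ℕ) (t : ℝ) (j : Fin m) : ℝ :=
  1 - g (t - (j : ℝ)) - g (((n : ℝ) - 1) * t - ((m : ℝ) - 1 - (j : ℝ)))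

def frontT {m : ℕ} (t : ℝ) (j : Fin m) : ℝ := g (t - (j : ℝ))

lemma min_eq_some {α : Type*} [LinearOrder α] {s : Finset α} {x : α}
    (hx : x ∈ s) (h : ∀ y ∈ s, x ≤ y) : s.min = some x :=
  le_antisymm (Finset.min_le hx) (Finset.le_min (fun y hy => by
    rw [show (some x : WithTop α) = (x : WithTop α) from rfl]
    exact_mod_cast h y hy))

/-- positivity of remaining mass, with explicit front/back counters `F`, `C`. -/
lemma pos_iff {n m : ℕ} (hn : 2 ≤ n) {t : ℝ} {F C : ℕ}
    (hFt : (F:ℝ) ≤ t) (htF : t < F + 1)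
    (hCc : (C:ℝ) ≤ ((n:ℝ)-1)*t) (hcC : ((n:ℝ)-1)*t < C + 1)
    (htm : (n:ℝ)*t < m) (j : Fin m) :
    0 < remT n m t j ↔ (F ≤ j.val ∧ j.val + C + 1 ≤ m) := by
  set c := ((n:ℝ)-1)*t with hc
  have htc : t + c = (n:ℝ)*t := by rw [hc]; ring
  constructor
  · intro hpos
    by_contra hcon
    push_neg at hcon
    rcases lt_or_ge j.val F with hjF | hjF
    · have hj : (j:ℝ) ≤ (F:ℝ) - 1 := by
        have : (j.val:ℝ) + 1 ≤ F := by exact_mod_cast hjF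
        linarith
      have h1 : g (t - (j:ℝ)) = 1 := g_one (by linarith)
      have h2 : 0 ≤ g (c - ((m:ℝ) - 1 - (j:ℝ))) := g_nonneg _
      unfold remT at hpos
      rw [h1] at hpos; linarith
    · have hmj : m < j.val + C + 1 := hcon hjF
      have hj : (m:ℝ) ≤ (j:ℝ) + C := by
        have : (m:ℝ) + 1 ≤ (j.val:ℝ) + C + 1 := by exact_mod_cast hmj
        linarith
      have h2 : g (c - ((m:ℝ) - 1 - (j:ℝ))) = 1 := g_one (by linarith)
      have h1 : 0 ≤ g (t - (j:ℝ)) := g_nonneg _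
      unfold remT at hpos
      rw [h2] at hpos; linarith
  · rintro ⟨h1, h2⟩
    have hjF : (F:ℝ) ≤ (j:ℝ) := by exact_mod_cast h1
    have hjC : (j:ℝ) + C + 1 ≤ m := by exact_mod_cast h2
    unfold remT
    have hg1 : g (t - (j:ℝ)) ≤ max 0 (t - (j:ℝ)) := g_le_max _
    have hg2 : g (c - ((m:ℝ)-1-(j:ℝ))) ≤ max 0 (c - ((m:ℝ)-1-(j:ℝ))) := g_le_max _
    rcases le_or_gt (t - (j:ℝ)) 0 with ha1 | ha1
    · rw [g_nonpos ha1]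
      have : g (c - ((m:ℝ)-1-(j:ℝ))) < 1 := by
        rcases le_or_gt (c - ((m:ℝ)-1-(j:ℝ))) 0 with ha2 | ha2
        · rw [g_nonpos ha2]; norm_num
        · calc g (c - ((m:ℝ)-1-(j:ℝ))) ≤ max 0 (c - ((m:ℝ)-1-(j:ℝ))) := hg2
            _ = c - ((m:ℝ)-1-(j:ℝ)) := max_eq_right ha2.le
            _ < 1 := by linarith
      linarith
    · rcases le_or_gt (c - ((m:ℝ)-1-(j:ℝ))) 0 with ha2 | ha2
      · rw [g_nonpos ha2]
        have : g (t - (j:ℝ)) < 1 := by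
          calc g (t - (j:ℝ)) ≤ max 0 (t - (j:ℝ)) := hg1
            _ = t - (j:ℝ) := max_eq_right ha1.le
            _ < 1 := by linarith
        linarith
      · have e1 : g (t - (j:ℝ)) ≤ t - (j:ℝ) := by
          calc g (t - (j:ℝ)) ≤ max 0 (t - (j:ℝ)) := hg1
            _ = t - (j:ℝ) := max_eq_right ha1.le
        have e2 : g (c - ((m:ℝ)-1-(j:ℝ))) ≤ c - ((m:ℝ)-1-(j:ℝ)) := by
          calc g (c - ((m:ℝ)-1-(j:ℝ))) ≤ max 0 (c - ((m:ℝ)-1-(j:ℝ))) := hg2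
            _ = c - ((m:ℝ)-1-(j:ℝ)) := max_eq_right ha2.le
        linarith

lemma rem_all_zero {n m : ℕ} {t : ℝ} (htm : (n:ℝ)*t = m)
    (j : Fin m) : remT n m t j = 0 := by
  have hc : ((n:ℝ)-1)*t = (m:ℝ) - t := by nlinarith [htm]
  unfold remT
  rw [hc]
  have harg : (m:ℝ) - t - ((m:ℝ) - 1 - (j:ℝ)) = (j:ℝ) + 1 - t := by ring
  rw [harg]
  rcases le_or_gt t (j:ℝ) with h1 | h1
  · rw [g_nonpos (by linarith), g_one (by linarith)]; ring
  · rcases le_or_gt t ((j:ℝ)+1) with h2 | h2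
    · rw [g_mem (by linarith) (by linarith), g_mem (by linarith) (by linarith)]; ring
    · rw [g_one (by linarith), g_nonpos (by linarith)]; ring

/-- if every item is depleted, the step does nothing. -/
lemma step_of_zero {n m : ℕ} (b : Fin n → Fin m → ℝ)
    (s : (Fin m → ℝ) × (Fin n → Fin m → ℝ)) (h : ∀ j, s.1 j = 0) :
    (psStep b s).1 = s.1 ∧ ∀ a j, (psStep b s).2 a j = s.2 a j := by
  have hfilt : (Finset.univ.filter (fun j => 0 < s.1 j)) = (∅ : Finset (Fin m)) := by
    apply Finset.filter_false_of_mem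
    intro j _
    rw [h j]
    exact lt_irrefl 0
  have htop : ∀ a : Fin n, psTop (b a) s.1 = none := by
    intro a
    unfold psTop
    rw [hfilt, Finset.filter_empty, Finset.min_empty]
    rfl
  have heat : ∀ j, psEaters b s.1 j = 0 := by
    intro j
    unfold psEaters
    rw [Finset.card_eq_zero]
    apply Finset.filter_false_of_mem
    intro a _
    rw [htop a]
    simp
  have hdel : psDelta b s.1 = 0 := by
    unfold psDelta
    have : (Finset.univ.filter (fun j => 0 < s.1 j ∧ 0 < psEaters b s.1 j)) = (∅ : Finset (Fin m)) := by
      apply Finset.filter_false_of_mem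
      intro j _
      rw [h j, heat j]
      rintro ⟨h1, _⟩
      exact lt_irrefl 0 h1
    rw [this, Finset.image_empty, Finset.min_empty]
    rfl
  constructor
  · funext j
    show s.1 j - psDelta b s.1 * _ = s.1 j
    rw [hdel]; ring
  · intro a j
    show s.2 a j + (if psTop (b a) s.1 = some j then psDelta b s.1 else 0) = s.2 a j
    rw [htop a]
    simp

end PS16

namespace PS16

set_option maxHeartbeats 4000000 in
lemma step_main {n m : ℕ} (hn : 2 ≤ n) (i : Fin n) (b : Fin n → Fin m → ℝ) (v : ℕ → ℝ)
    (hbi : ∀ j : Fin m, b i j = v j.val)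
    (hvdec : ∀ j l : ℕ, j ≤ l → v l ≤ v j)
    (hothers : ∀ a, a ≠ i → ∀ j j' : Fin m, j < j' → b a j < b a j')
    {t : ℝ} {F C : ℕ} (ht0 : 0 ≤ t)
    (hFt : (F:ℝ) ≤ t) (htF : t < F + 1)
    (hCc : (C:ℝ) ≤ ((n:ℝ)-1)*t) (hcC : ((n:ℝ)-1)*t < C + 1)
    (htm : (n:ℝ)*t < m)
    (s : (Fin m → ℝ) × (Fin n → Fin m → ℝ))
    (hrem : s.1 = remT n m t) (hfr : ∀ j, s.2 i j = frontT t j) :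
    ∃ t', t ≤ t' ∧ (n:ℝ)*t' ≤ m ∧
      ((n:ℝ)*t' = m ∨ ∃ F' C' : ℕ, (F':ℝ) ≤ t' ∧ t' < F' + 1 ∧
        (C':ℝ) ≤ ((n:ℝ)-1)*t' ∧ ((n:ℝ)-1)*t' < C' + 1 ∧ F + C + 1 ≤ F' + C') ∧
      (psStep b s).1 = remT n m t' ∧ (∀ j, (psStep b s).2 i j = frontT t' j) := by
  have hn1 : (1:ℝ) ≤ (n:ℝ) - 1 := by
    have : (2:ℝ) ≤ n := by exact_mod_cast hn
    linarith
  have hc0 : (0:ℝ) ≤ ((n:ℝ)-1)*t := le_trans (by positivity) hCc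
  have hFCm : F + C + 1 ≤ m := by
    have : ((F + C : ℕ) : ℝ) < m := by push_cast; nlinarith
    have := Nat.cast_lt.mp this
    omega
  have hFm : F < m := by omega
  set fl : Fin m := ⟨F, hFm⟩ with hfl
  set blv : ℕ := m - 1 - C with hblvdef
  have hblv : blv + C + 1 = m := by omega
  set bl : Fin m := ⟨blv, by omega⟩ with hbl
  have hflval : fl.val = F := rfl
  have hblval : bl.val = blv := rfl
  have hflR : ((fl.val : ℕ) : ℝ) = (F : ℝ) := rfl
  have hblR : ((bl.val : ℕ) : ℝ) = (blv : ℝ) := rfl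
  have hblvR : (blv : ℝ) + C + 1 = m := by exact_mod_cast hblv
  have hposchar : ∀ j : Fin m, 0 < s.1 j ↔ (F ≤ j.val ∧ j.val ≤ blv) := by
    intro j
    rw [hrem, pos_iff hn hFt htF hCc hcC htm j]
    omega
  have htopi : psTop (b i) s.1 = some fl := by
    unfold psTop
    apply min_eq_some
    · simp only [Finset.mem_filter, Finset.mem_univ, true_and]
      refine ⟨(hposchar fl).2 ⟨by omega, by omega⟩, ?_⟩
      intro j' hj'
      have hj'p := (hposchar j').1 hj'
      rw [hbi, hbi]
      exact hvdec _ _ hj'p.1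
    · intro y hy
      simp only [Finset.mem_filter, Finset.mem_univ, true_and] at hy
      have := (hposchar y).1 hy.1
      exact this.1
  have htopo : ∀ a, a ≠ i → psTop (b a) s.1 = some bl := by
    intro a ha
    unfold psTop
    apply min_eq_some
    · simp only [Finset.mem_filter, Finset.mem_univ, true_and]
      refine ⟨(hposchar bl).2 ⟨by omega, by omega⟩, ?_⟩
      intro j' hj'
      have hj'p := (hposchar j').1 hj'
      rcases lt_or_eq_of_le (show j' ≤ bl from hj'p.2) with h | h
      · exact (hothers a ha j' bl h).le
      · rw [h]
    · intro y hy
      simp only [Finset.mem_filter, Finset.mem_univ, true_and] at hy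
      obtain ⟨hy1, hy2⟩ := hy
      by_contra hlt
      push_neg at hlt
      have h1 := hothers a ha y bl hlt
      have h2 := hy2 bl ((hposchar bl).2 ⟨by omega, by omega⟩)
      linarith
  by_cases hsplit : F + C + 2 ≤ m
  · -- CASE A : fl ≠ bl
    have hmR : (F:ℝ) + C + 2 ≤ m := by exact_mod_cast hsplit
    have hflbl : F < blv := by omega
    have hfbne : fl ≠ bl := by
      intro hh
      rw [Fin.ext_iff] at hh
      omega
    have heatN : ∀ j : Fin m, psEaters b s.1 j =
        if j = fl then 1 else if j = bl then n - 1 else 0 := by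
      intro j
      unfold psEaters
      by_cases h1 : j = fl
      · subst h1
        rw [if_pos rfl]
        have : Finset.univ.filter (fun a => psTop (b a) s.1 = some fl) = {i} := by
          ext a
          simp only [Finset.mem_filter, Finset.mem_univ, true_and, Finset.mem_singleton]
          constructor
          · intro ha
            by_contra hne
            rw [htopo a hne] at ha
            exact hfbne (Option.some_inj.mp ha).symm
          · rintro rfl
            exact htopi
        rw [this, Finset.card_singleton]
      · rw [if_neg h1]
        by_cases h2 : j = bl
        · subst h2
          rw [if_pos rfl]
          have : Finset.univ.filter (fun a => psTop (b a) s.1 = some bl) =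
              Finset.univ.erase i := by
            ext a
            simp only [Finset.mem_filter, Finset.mem_univ, true_and, Finset.mem_erase,
              and_true]
            constructor
            · intro ha hai
              subst hai
              rw [htopi] at ha
              exact h1 (Option.some_inj.mp ha).symm
            · intro ha
              exact htopo a ha
          rw [this, Finset.card_erase_of_mem (Finset.mem_univ i), Finset.card_univ,
            Fintype.card_fin]
        · rw [if_neg h2]
          rw [Finset.card_eq_zero]
          apply Finset.filter_false_of_mem
          intro a _
          by_cases hai : a = i
          · subst hai
            rw [htopi]
            intro hcon
            exact h1 (Option.some_inj.mp hcon).symm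
          · rw [htopo a hai]
            intro hcon
            exact h2 (Option.some_inj.mp hcon).symm
    have hremfl : s.1 fl = 1 + F - t := by
      rw [hrem]
      unfold remT
      rw [show ((fl.val : ℕ) : ℝ) = (F:ℝ) from rfl]
      rw [g_mem (by linarith) (by linarith)]
      rw [g_nonpos (by linarith)]
      ring
    have hrembl : s.1 bl = 1 + C - ((n:ℝ)-1)*t := by
      rw [hrem]
      unfold remT
      rw [show ((bl.val : ℕ) : ℝ) = (blv:ℝ) from rfl]
      have hblvF : (F:ℝ) + 1 ≤ blv := by
        have : F + 1 ≤ blv := by omega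
        exact_mod_cast this
      rw [g_nonpos (by linarith)]
      rw [g_mem (by linarith) (by linarith)]
      linarith [hblvR]
    have hDset : Finset.univ.filter (fun j => 0 < s.1 j ∧ 0 < psEaters b s.1 j)
        = {fl, bl} := by
      ext j
      simp only [Finset.mem_filter, Finset.mem_univ, true_and, Finset.mem_insert,
        Finset.mem_singleton]
      constructor
      · rintro ⟨hp, he⟩
        by_contra hcon
        push_neg at hcon
        rw [heatN j, if_neg hcon.1, if_neg hcon.2] at he
        exact lt_irrefl 0 he
      · rintro (rfl | rfl)
        · exact ⟨(hposchar fl).2 ⟨by omega, by omega⟩, by rw [heatN, if_pos rfl]; omega⟩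
        · refine ⟨(hposchar bl).2 ⟨by omega, by omega⟩, ?_⟩
          rw [heatN, if_neg (Ne.symm hfbne), if_pos rfl]
          omega
    have hcastn1 : ((n - 1 : ℕ) : ℝ) = (n:ℝ) - 1 := by
      rw [Nat.cast_sub (by omega : 1 ≤ n), Nat.cast_one]
    have hdelta : psDelta b s.1 =
        min (1 + F - t) ((1 + C - ((n:ℝ)-1)*t)/((n:ℝ)-1)) := by
      unfold psDelta
      rw [hDset, Finset.image_insert, Finset.image_singleton]
      have e1 : s.1 fl / (psEaters b s.1 fl : ℝ) = 1 + F - t := by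
        rw [heatN, if_pos rfl, hremfl]
        norm_num
      have e2 : s.1 bl / (psEaters b s.1 bl : ℝ) =
          (1 + C - ((n:ℝ)-1)*t)/((n:ℝ)-1) := by
        rw [heatN, if_neg (Ne.symm hfbne), if_pos rfl, hrembl, hcastn1]
      rw [e1, e2]
      set x1 : ℝ := 1 + F - t
      set x2 : ℝ := (1 + C - ((n:ℝ)-1)*t)/((n:ℝ)-1)
      have hmin : ({x1, x2} : Finset ℝ).min = some (min x1 x2) := by
        apply min_eq_some
        · rcases min_choice x1 x2 with h | h <;> rw [h] <;> simp
        · intro y hy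
          simp only [Finset.mem_insert, Finset.mem_singleton] at hy
          rcases hy with rfl | rfl
          · exact min_le_left _ _
          · exact min_le_right _ _
      rw [hmin]
      rfl
    have hdf : psDelta b s.1 ≤ 1 + F - t := by
      rw [hdelta]; exact min_le_left _ _
    have hdb : ((n:ℝ)-1) * psDelta b s.1 ≤ 1 + C - ((n:ℝ)-1)*t := by
      have h := hdelta ▸ min_le_right (1 + F - t) ((1 + C - ((n:ℝ)-1)*t)/((n:ℝ)-1))
      calc ((n:ℝ)-1) * psDelta b s.1
          ≤ ((n:ℝ)-1) * ((1 + C - ((n:ℝ)-1)*t)/((n:ℝ)-1)) := by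
            apply mul_le_mul_of_nonneg_left h (by linarith)
        _ = 1 + C - ((n:ℝ)-1)*t := by field_simp
    have hdpos : 0 < psDelta b s.1 := by
      rw [hdelta]
      exact lt_min (by linarith) (div_pos (by linarith) (by linarith))
    refine ⟨t + psDelta b s.1, by linarith, ?_, ?_, ?_, ?_⟩
    · nlinarith
    · right
      refine ⟨Nat.floor (t + psDelta b s.1), Nat.floor (((n:ℝ)-1)*(t + psDelta b s.1)),
        Nat.floor_le (by linarith), Nat.lt_floor_add_one _,
        Nat.floor_le (by nlinarith), Nat.lt_floor_add_one _, ?_⟩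
      rcases min_choice (1 + F - t) ((1 + C - ((n:ℝ)-1)*t)/((n:ℝ)-1)) with hmin | hmin
      · have hdval : psDelta b s.1 = 1 + F - t := by rw [hdelta, hmin]
        have h1 : F + 1 ≤ Nat.floor (t + psDelta b s.1) := by
          apply Nat.le_floor
          push_cast
          linarith
        have h2 : C ≤ Nat.floor (((n:ℝ)-1)*(t + psDelta b s.1)) := by
          apply Nat.le_floor
          nlinarith
        omega
      · have hdval : ((n:ℝ)-1) * psDelta b s.1 = 1 + C - ((n:ℝ)-1)*t := by
          rw [hdelta, hmin]
          field_simp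
        have h1 : F ≤ Nat.floor (t + psDelta b s.1) := by
          apply Nat.le_floor
          push_cast
          linarith
        have h2 : C + 1 ≤ Nat.floor (((n:ℝ)-1)*(t + psDelta b s.1)) := by
          apply Nat.le_floor
          push_cast
          nlinarith
        omega
    · -- remaining masses update
      funext j
      have hu : (psStep b s).1 j = s.1 j - psDelta b s.1 * (psEaters b s.1 j : ℝ) := rfl
      rw [hu, heatN j]
      have hjm : j.val < m := j.2
      have hblvF : (F:ℝ) + 1 ≤ blv := by exact_mod_cast (show F + 1 ≤ blv by omega)
      rcases lt_trichotomy j.val F with hj | hj | hj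
      · -- j left of fl : fully eaten, unchanged
        have hne1 : j ≠ fl := by simp only [ne_eq, Fin.ext_iff]; omega
        have hne2 : j ≠ bl := by simp only [ne_eq, Fin.ext_iff]; omega
        rw [if_neg hne1, if_neg hne2, Nat.cast_zero, mul_zero, show s.1 j = remT n m t j from congrFun hrem j]
        unfold remT
        have hjR : (j.val:ℝ) + 1 ≤ F := by exact_mod_cast hj
        have hjmR : (C:ℝ) + 2 ≤ (m:ℝ) - (j.val : ℝ) := by
          have h9 : j.val + C + 2 ≤ m := by omega
          have h9' := (show ((j.val + C + 2 : ℕ):ℝ) ≤ m by exact_mod_cast h9)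
          push_cast at h9'
          linarith
        rw [g_one (by linarith), g_nonpos (by nlinarith),
          g_one (by linarith), g_nonpos (by nlinarith)]
        ring
      · -- j = fl
        have hje : j = fl := by rw [Fin.ext_iff]; omega
        subst hje
        rw [if_pos rfl, Nat.cast_one, mul_one, hremfl]
        unfold remT
        rw [show ((fl.val : ℕ) : ℝ) = (F:ℝ) from rfl]
        rw [g_mem (by linarith) (by linarith), g_nonpos (by nlinarith)]
        ring
      · have hjR : (F:ℝ) + 1 ≤ (j.val:ℝ) := by exact_mod_cast hj
        have hne1 : j ≠ fl := by simp only [ne_eq, Fin.ext_iff]; omega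
        rcases lt_trichotomy j.val blv with hk | hk | hk
        · -- strictly between
          have hne2 : j ≠ bl := by simp only [ne_eq, Fin.ext_iff]; omega
          rw [if_neg hne1, if_neg hne2, Nat.cast_zero, mul_zero, show s.1 j = remT n m t j from congrFun hrem j]
          unfold remT
          have hkR : (j.val:ℝ) + 1 ≤ blv := by exact_mod_cast hk
          rw [g_nonpos (by linarith), g_nonpos (by nlinarith),
            g_nonpos (by linarith), g_nonpos (by nlinarith)]
          ring
        · -- j = bl
          have hje : j = bl := by rw [Fin.ext_iff]; omega
          subst hje
          rw [if_neg hne1, if_pos rfl, hcastn1, hrembl]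
          unfold remT
          rw [show ((bl.val : ℕ) : ℝ) = (blv:ℝ) from rfl]
          rw [g_nonpos (by linarith), g_mem (by nlinarith) (by nlinarith)]
          linear_combination hblvR
        · -- j right of bl : fully eaten by others
          have hne2 : j ≠ bl := by simp only [ne_eq, Fin.ext_iff]; omega
          rw [if_neg hne1, if_neg hne2, Nat.cast_zero, mul_zero, show s.1 j = remT n m t j from congrFun hrem j]
          unfold remT
          have hkR : (blv:ℝ) + 1 ≤ (j.val:ℝ) := by exact_mod_cast hk
          rw [g_nonpos (by linarith), g_one (by nlinarith),
            g_nonpos (by linarith), g_one (by nlinarith)]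
          ring
    · -- agent i's shares update
      intro j
      have hu : (psStep b s).2 i j = s.2 i j +
          (if psTop (b i) s.1 = some j then psDelta b s.1 else 0) := rfl
      rw [hu, htopi, hfr j]
      unfold frontT
      by_cases hje : j = fl
      · subst hje
        rw [if_pos rfl]
        rw [show ((fl.val : ℕ) : ℝ) = (F:ℝ) from rfl]
        rw [g_mem (by linarith) (by linarith), g_mem (by linarith) (by linarith)]
        ring
      · rw [if_neg (fun hcon => hje (Option.some_inj.mp hcon).symm)]
        rw [add_zero]
        rcases lt_trichotomy j.val F with hj | hj | hj
        · have hjR : (j.val:ℝ) + 1 ≤ F := by exact_mod_cast hj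
          rw [g_one (by linarith), g_one (by linarith)]
        · exact absurd (Fin.ext hj) hje
        · have hjR : (F:ℝ) + 1 ≤ (j.val:ℝ) := by exact_mod_cast hj
          rw [g_nonpos (by linarith), g_nonpos (by linarith)]
  · -- CASE B : fl = bl, final phase
    have hm1 : F + C + 1 = m := by omega
    have hmR : (F:ℝ) + C + 1 = m := by exact_mod_cast hm1
    have hblfl : bl = fl := by rw [Fin.ext_iff]; omega
    have heatN : ∀ j : Fin m, psEaters b s.1 j = if j = fl then n else 0 := by
      intro j
      unfold psEaters
      by_cases h1 : j = fl
      · subst h1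
        rw [if_pos rfl]
        have : Finset.univ.filter (fun a => psTop (b a) s.1 = some fl) = Finset.univ := by
          ext a
          simp only [Finset.mem_filter, Finset.mem_univ, true_and, iff_true]
          by_cases hai : a = i
          · subst hai; exact htopi
          · rw [htopo a hai, hblfl]
        rw [this, Finset.card_univ, Fintype.card_fin]
      · rw [if_neg h1, Finset.card_eq_zero]
        apply Finset.filter_false_of_mem
        intro a _
        by_cases hai : a = i
        · subst hai
          rw [htopi]
          intro hcon
          exact h1 (Option.some_inj.mp hcon).symm
        · rw [htopo a hai, hblfl]
          intro hcon
          exact h1 (Option.some_inj.mp hcon).symm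
    have hremfl : s.1 fl = (m:ℝ) - (n:ℝ)*t := by
      rw [hrem]
      unfold remT
      rw [show ((fl.val : ℕ) : ℝ) = (F:ℝ) from rfl]
      rw [g_mem (by linarith) (by linarith),
        g_mem (by linarith) (by linarith)]
      linarith
    have hDset : Finset.univ.filter (fun j => 0 < s.1 j ∧ 0 < psEaters b s.1 j)
        = {fl} := by
      ext j
      simp only [Finset.mem_filter, Finset.mem_univ, true_and, Finset.mem_singleton]
      constructor
      · rintro ⟨hp, he⟩
        by_contra hcon
        rw [heatN j, if_neg hcon] at he
        exact lt_irrefl 0 he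
      · rintro rfl
        refine ⟨(hposchar fl).2 ⟨by omega, by omega⟩, ?_⟩
        rw [heatN, if_pos rfl]
        omega
    have hdelta : psDelta b s.1 = ((m:ℝ) - (n:ℝ)*t) / n := by
      unfold psDelta
      rw [hDset, Finset.image_singleton]
      have e1 : s.1 fl / (psEaters b s.1 fl : ℝ) = ((m:ℝ) - (n:ℝ)*t) / n := by
        rw [heatN, if_pos rfl, hremfl]
      rw [e1, Finset.min_singleton]
      rfl
    have hnR : (0:ℝ) < n := by positivity
    have hdpos : 0 < psDelta b s.1 := by
      rw [hdelta]
      exact div_pos (by linarith) hnR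
    have hdn : (n:ℝ) * psDelta b s.1 = (m:ℝ) - (n:ℝ)*t := by
      rw [hdelta]
      field_simp
    have hdle : psDelta b s.1 ≤ (m:ℝ) - (n:ℝ)*t := by
      rw [hdelta]
      exact div_le_self (by linarith) (by exact_mod_cast le_trans (by norm_num : (1:ℕ) ≤ 2) hn)
    have hd1 : ((n:ℝ)-1) * psDelta b s.1 ≤ (m:ℝ) - (n:ℝ)*t := by
      nlinarith
    have hnt' : (n:ℝ) * (t + psDelta b s.1) = m := by
      rw [mul_add, hdn]
      ring
    have ht'F : t + psDelta b s.1 ≤ (F:ℝ) + 1 := by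
      have : (m:ℝ) - (n:ℝ)*t ≤ 1 - (t - F) := by linarith
      linarith
    have hc'C : ((n:ℝ)-1) * (t + psDelta b s.1) ≤ (C:ℝ) + 1 := by
      have h1 : ((n:ℝ)-1)*(t + psDelta b s.1) = ((n:ℝ)-1)*t + ((n:ℝ)-1)*psDelta b s.1 := by
        ring
      have : (m:ℝ) - (n:ℝ)*t ≤ 1 - (((n:ℝ)-1)*t - C) := by linarith
      linarith
    refine ⟨t + psDelta b s.1, by linarith, le_of_eq hnt', Or.inl hnt', ?_, ?_⟩
    · funext j
      have hu : (psStep b s).1 j = s.1 j - psDelta b s.1 * (psEaters b s.1 j : ℝ) := rfl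
      rw [hu, heatN j, rem_all_zero hnt' j]
      by_cases hje : j = fl
      · subst hje
        rw [if_pos rfl, hremfl]
        linarith [hdn]
      · rw [if_neg hje, Nat.cast_zero, mul_zero,
          show s.1 j = remT n m t j from congrFun hrem j]
        unfold remT
        have hjne : j.val ≠ F := fun hh => hje (Fin.ext hh)
        rcases lt_or_gt_of_ne hjne with hj | hj
        · have hjR : (j.val:ℝ) + 1 ≤ F := by exact_mod_cast hj
          rw [g_one (by linarith), g_nonpos (by linarith)]
          ring
        · have hjR : (F:ℝ) + 1 ≤ (j.val:ℝ) := by exact_mod_cast hj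
          have hjmR : (j.val:ℝ) ≤ (m:ℝ) - 1 := by
            have h2 : ((j.val + 1 : ℕ):ℝ) ≤ m := by exact_mod_cast j.2
            push_cast at h2
            linarith
          rw [g_nonpos (by linarith), g_one (by linarith)]
          ring
    · intro j
      have hu : (psStep b s).2 i j = s.2 i j +
          (if psTop (b i) s.1 = some j then psDelta b s.1 else 0) := rfl
      rw [hu, htopi, hfr j]
      unfold frontT
      by_cases hje : j = fl
      · subst hje
        rw [if_pos rfl]
        rw [show ((fl.val : ℕ) : ℝ) = (F:ℝ) from rfl]
        rw [g_mem (by linarith) (by linarith), g_mem (by linarith) (by linarith)]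
        ring
      · rw [if_neg (fun hcon => hje (Option.some_inj.mp hcon).symm), add_zero]
        have hjne : j.val ≠ F := fun hh => hje (Fin.ext hh)
        rcases lt_or_gt_of_ne hjne with hj | hj
        · have hjR : (j.val:ℝ) + 1 ≤ F := by exact_mod_cast hj
          rw [g_one (by linarith), g_one (by linarith)]
        · have hjR : (F:ℝ) + 1 ≤ (j.val:ℝ) := by exact_mod_cast hj
          rw [g_nonpos (by linarith), g_nonpos (by linarith)]

end PS16


namespace PS16

lemma invariant {n m : ℕ} (hn : 2 ≤ n) (hm : 0 < m) (i : Fin n)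
    (b : Fin n → Fin m → ℝ) (v : ℕ → ℝ)
    (hbi : ∀ j : Fin m, b i j = v j.val)
    (hvdec : ∀ j l : ℕ, j ≤ l → v l ≤ v j)
    (hothers : ∀ a, a ≠ i → ∀ j j' : Fin m, j < j' → b a j < b a j') :
    ∀ k : ℕ, ∃ t : ℝ, 0 ≤ t ∧ (n:ℝ)*t ≤ m ∧
      ((n:ℝ)*t = m ∨ ∃ F C : ℕ, (F:ℝ) ≤ t ∧ t < F + 1 ∧
        (C:ℝ) ≤ ((n:ℝ)-1)*t ∧ ((n:ℝ)-1)*t < C + 1 ∧ k ≤ F + C) ∧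
      ((psStep b)^[k] (fun _ => 1, fun _ _ => 0)).1 = remT n m t ∧
      (∀ j, ((psStep b)^[k] (fun _ => (1:ℝ), fun _ _ => (0:ℝ))).2 i j = frontT t j) := by
  have hn0 : (0:ℝ) < n := by positivity
  have hn1 : (1:ℝ) ≤ (n:ℝ) - 1 := by
    have : (2:ℝ) ≤ n := by exact_mod_cast hn
    linarith
  intro k
  induction k with
  | zero =>
    refine ⟨0, le_refl 0, by rw [mul_zero]; positivity, ?_, ?_, ?_⟩
    · right
      exact ⟨0, 0, by norm_num, by norm_num, by norm_num, by norm_num, le_refl 0⟩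
    · funext j
      show (1:ℝ) = remT n m 0 j
      unfold remT
      have hj : (j.val:ℝ) ≤ (m:ℝ) - 1 := by
        have h2 : ((j.val + 1 : ℕ):ℝ) ≤ m := by exact_mod_cast j.2
        push_cast at h2
        linarith
      have e1 : g (0 - ((j.val:ℕ):ℝ)) = 0 := g_nonpos (by simp)
      have e2 : g (((n:ℝ)-1) * 0 - ((m:ℝ) - 1 - ((j.val:ℕ):ℝ))) = 0 :=
        g_nonpos (by rw [mul_zero]; linarith)
      rw [e1, e2]
      ring
    · intro j
      show (0:ℝ) = frontT 0 j
      unfold frontT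
      rw [g_nonpos (by simp)]
  | succ k ih =>
    obtain ⟨t, ht0, htm, hdisj, hrem, hfr⟩ := ih
    by_cases hteq : (n:ℝ)*t = m
    · -- everything is eaten : the step is a no-op
      have hz : ∀ j, ((psStep b)^[k] (fun _ => (1:ℝ), fun _ _ => (0:ℝ))).1 j = 0 := by
        intro j
        rw [hrem]
        exact rem_all_zero hteq j
      obtain ⟨hz1, hz2⟩ := step_of_zero b _ hz
      refine ⟨t, ht0, htm, Or.inl hteq, ?_, ?_⟩
      · rw [Function.iterate_succ_apply', hz1, hrem]
      · intro j
        rw [Function.iterate_succ_apply', hz2, hfr j]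
    · have htlt : (n:ℝ)*t < m := lt_of_le_of_ne htm hteq
      rcases hdisj with heq | ⟨F, C, hFt, htF, hCc, hcC, hk⟩
      · exact absurd heq hteq
      obtain ⟨t', htt', htm', hdisj', hrem', hfr'⟩ :=
        step_main hn i b v hbi hvdec hothers ht0 hFt htF hCc hcC htlt _ hrem hfr
      refine ⟨t', by linarith, htm', ?_, ?_, ?_⟩
      · rcases hdisj' with h | ⟨F', C', h1, h2, h3, h4, h5⟩
        · exact Or.inl h
        · exact Or.inr ⟨F', C', h1, h2, h3, h4, by omega⟩
      · rw [Function.iterate_succ_apply']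
        exact hrem'
      · intro j
        rw [Function.iterate_succ_apply']
        exact hfr' j

end PS16

open PS16 in
/-- if agent `i`'s values are weakly decreasing in the item index
while every other agent's reported values are in the strictly opposite order,
probabilistic serial gives agent `i` items `0, …, ⌊m/n⌋ − 1` entirely and a
fraction `m/n − ⌊m/n⌋` of item `⌊m/n⌋`.  Moreover, among all fractional bundles
of total mass `m/n` this allocation maximizes agent `i`'s utility. -/
theorem stmt16 (n m : ℕ) (hn : 2 ≤ n) (hm : 0 < m) (i : Fin n)
    (b : Fin n → Fin m → ℝ) (v : ℕ → ℝ)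
    (hbi : ∀ j : Fin m, b i j = v j.val)
    (hvdec : ∀ j l : ℕ, j ≤ l → v l ≤ v j)
    (hothers : ∀ a, a ≠ i → ∀ j j' : Fin m, j < j' → b a j < b a j') :
    (∀ j : Fin m, psAlloc n m b i j =
      if j.val < m / n then 1
      else if j.val = m / n then (m : ℝ) / (n : ℝ) - ((m / n : ℕ) : ℝ) else 0) ∧
    (∀ X : Fin m → ℝ, (∀ j, 0 ≤ X j ∧ X j ≤ 1) → (∑ j, X j) = (m : ℝ) / (n : ℝ) →
      ∑ j, X j * v j.val ≤
        (∑ l ∈ Finset.range (m / n), v l) +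
          ((m : ℝ) / (n : ℝ) - ((m / n : ℕ) : ℝ)) * v (m / n)) := by
  have hn0 : (0:ℝ) < n := by positivity
  have hn1 : (1:ℝ) ≤ (n:ℝ) - 1 := by
    have : (2:ℝ) ≤ n := by exact_mod_cast hn
    linarith
  set q : ℕ := m / n with hq
  have hq1 : (q:ℝ) ≤ (m:ℝ)/n := Nat.cast_div_le
  have hq2 : (m:ℝ)/n < q + 1 := by
    have h1 : m < n * q + n := by
      have h2 := Nat.div_add_mod m n
      have h3 : m % n < n := Nat.mod_lt m (by omega)
      calc m = n * q + m % n := h2.symm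
        _ < n * q + n := Nat.add_lt_add_left h3 _
    rw [div_lt_iff₀ hn0]
    have : (m:ℝ) < (n:ℝ) * q + n := by exact_mod_cast h1
    linarith
  constructor
  · -- Part 1 : description of the PS allocation for agent i
    obtain ⟨t, ht0, htm, hdisj, hrem, hfr⟩ :=
      invariant hn hm i b v hbi hvdec hothers m
    have hteq : (n:ℝ)*t = m := by
      rcases hdisj with h | ⟨F, C, hFt, htF, hCc, hcC, hk⟩
      · exact h
      · have hFC : (m:ℝ) ≤ (F:ℝ) + C := by exact_mod_cast hk
        nlinarith
    have htval : t = (m:ℝ)/n := by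
      field_simp
      linarith [hteq]
    intro j
    have : psAlloc n m b i j = frontT t j := hfr j
    rw [this, htval]
    unfold frontT
    rcases lt_trichotomy j.val q with hj | hj | hj
    · have hjR : (j.val:ℝ) + 1 ≤ q := by exact_mod_cast hj
      rw [if_pos hj, g_one (by linarith)]
    · have hjR : ((j.val:ℕ):ℝ) = (q:ℝ) := by exact_mod_cast hj
      rw [if_neg (by simp [hj]), if_pos hj, hjR, g_mem (by linarith) (by linarith)]
    · have hjR : (q:ℝ) + 1 ≤ (j.val:ℝ) := by exact_mod_cast hj
      rw [if_neg (lt_asymm hj), if_neg (ne_of_gt hj), g_nonpos (by linarith)]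
  · -- Part 2 : optimality of the prefix allocation
    intro X hX hXsum
    have hqm : q < m := Nat.div_lt_self hm (by omega)
    set fr : ℝ := (m:ℝ)/n - q with hfrdef
    have hfr0 : 0 ≤ fr := by rw [hfrdef]; linarith
    have hfr1 : fr ≤ 1 := by rw [hfrdef]; linarith
    set Y : ℕ → ℝ := fun l => if l < q then 1 else if l = q then fr else 0 with hY
    have hYeval : ∀ l : ℕ, l ≠ q → ¬ l < q → Y l = 0 := by
      intro l h1 h2
      rw [hY]
      simp only [if_neg h2, if_neg h1]
    have hYq : Y q = fr := by rw [hY]; simp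
    have hYlt : ∀ l : ℕ, l < q → Y l = 1 := by
      intro l h1
      rw [hY]
      simp only [if_pos h1]
    have hYsum : (∑ j : Fin m, Y j.val) = (m:ℝ)/n := by
      rw [Fin.sum_univ_eq_sum_range (fun l => Y l) m]
      rw [← Finset.sum_range_add_sum_Ico _ (le_of_lt hqm)]
      have e1 : ∑ l ∈ Finset.range q, Y l = q := by
        rw [Finset.sum_congr rfl (fun l hl => hYlt l (Finset.mem_range.mp hl))]
        simp
      have e2 : ∑ l ∈ Finset.Ico q m, Y l = fr := by
        rw [Finset.sum_eq_single_of_mem q (Finset.mem_Ico.mpr ⟨le_refl q, hqm⟩)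
          (fun l hl hne => hYeval l hne (not_lt_of_ge (Finset.mem_Ico.mp hl).1))]
        exact hYq
      rw [e1, e2, hfrdef]
      ring
    have hYv : (∑ j : Fin m, Y j.val * v j.val)
        = (∑ l ∈ Finset.range q, v l) + fr * v q := by
      rw [Fin.sum_univ_eq_sum_range (fun l => Y l * v l) m]
      rw [← Finset.sum_range_add_sum_Ico _ (le_of_lt hqm)]
      have e1 : ∑ l ∈ Finset.range q, Y l * v l = ∑ l ∈ Finset.range q, v l := by
        refine Finset.sum_congr rfl (fun l hl => ?_)
        rw [hYlt l (Finset.mem_range.mp hl), one_mul]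
      have e2 : ∑ l ∈ Finset.Ico q m, Y l * v l = fr * v q := by
        rw [Finset.sum_eq_single_of_mem q (Finset.mem_Ico.mpr ⟨le_refl q, hqm⟩)
          (fun l hl hne => by
            rw [hYeval l hne (not_lt_of_ge (Finset.mem_Ico.mp hl).1), zero_mul])]
        rw [hYq]
      rw [e1, e2]
    have key : ∀ j : Fin m, (X j - Y j.val) * (v j.val - v q) ≤ 0 := by
      intro j
      rcases lt_trichotomy j.val q with hj | hj | hj
      · have h1 : 0 ≤ 1 - X j := by linarith [(hX j).2]
        have h2 : 0 ≤ v j.val - v q := by linarith [hvdec j.val q (le_of_lt hj)]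
        rw [hYlt j.val hj]
        nlinarith [mul_nonneg h1 h2]
      · rw [hj, sub_self, mul_zero]
      · have h1 : 0 ≤ X j := (hX j).1
        have h2 : 0 ≤ v q - v j.val := by linarith [hvdec q j.val (le_of_lt hj)]
        rw [hYeval j.val (ne_of_gt hj) (lt_asymm hj)]
        nlinarith [mul_nonneg h1 h2]
    have hsum : (∑ j : Fin m, (X j - Y j.val) * (v j.val - v q)) ≤ 0 :=
      Finset.sum_nonpos (fun j _ => key j)
    have expand : (∑ j : Fin m, (X j - Y j.val) * (v j.val - v q))
        = (∑ j : Fin m, X j * v j.val) - (∑ j : Fin m, Y j.val * v j.val)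
          - ((∑ j : Fin m, X j) - (∑ j : Fin m, Y j.val)) * v q := by
      simp only [sub_mul, mul_sub]
      rw [Finset.sum_sub_distrib, Finset.sum_sub_distrib, Finset.sum_sub_distrib,
        ← Finset.sum_mul, ← Finset.sum_mul]
    rw [expand, hXsum, hYsum, hYv] at hsum
    clear_value q fr Y
    linarith [hsum]
end
end
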